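/- arXiv:2512.07653 — 6 statements merged into one kernel-verified Lean document; each statement's English description precedes it below -/
import Mathlib

section
/- The process W_n := θ_1^{−n} G_n(η) is an (ℱ_n)-martingale satisfying (E[|W_{m+n} − W_m|^p])^{1/p} ≤ c_0 θ_1^{−1} M ‖η‖_{ψ_1} Γ_m for all m, n ≥ 0; consequently there exists W_∞ ∈ L^p(ℙ) such that W_n → W_∞ almost surely and in L^p, W is uniformly integrable, and (E[|W_∞ − W_m|^p])^{1/p} ≤ c_0 θ_1^{−1} M ‖η‖_{ψ_1} Γ_m for every m ≥ 0. -/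
/-!
Since `η` is a `θ₁`-eigenfunction of `Q`, hypothesis (b) reads `E[G_{n+1} η | ℱ_n] = θ₁ G_n η`, so
`W_n = θ₁^{-n} G_n η` is a martingale, and (c) bounds its increments:
`‖W_{n+1} - W_n‖_p ≤ c₀ θ₁⁻¹ M ‖η‖_{ψ₁} γ_n`. Summing these gives the `L^p`-Cauchy estimate with the
tail `Γ_m`. In particular `W` is bounded in `L¹`, hence converges a.s. by the martingale convergence
theorem; Fatou's lemma turns the Cauchy estimate into the bound on `W_∞ - W_m`, which gives
convergence in `L^p`, and `L¹` convergence gives uniform integrability.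
-/

open MeasureTheory ProbabilityTheory Filter

/-- The weighted supremum norm `‖g‖_ψ = sup_x |g x| / ψ x`, valued in `[0,∞]`. -/
noncomputable def psiNorm {X : Type*} (ψ g : X → ℝ) : ENNReal :=
  ⨆ x, ENNReal.ofReal (|g x| / ψ x)

open scoped ENNReal NNReal Topology

section

variable {Ω : Type*} {mΩ : MeasurableSpace Ω} {μ : Measure Ω}

namespace MeasureTheory

theorem MemLp.eLpNorm_ofReal_eq {p : ℝ} (hp : 0 < p) {f : Ω → ℝ}
    (hf : MemLp f (ENNReal.ofReal p) μ) :
    eLpNorm f (ENNReal.ofReal p) μ = ENNReal.ofReal ((∫ ω, |f ω| ^ p ∂μ) ^ (1 / p)) := by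
  rw [hf.eLpNorm_eq_integral_rpow_norm (by simpa using hp) ENNReal.ofReal_ne_top,
    ENNReal.toReal_ofReal hp.le, one_div]
  rfl

theorem MemLp.rpow_integral_abs_rpow_le_iff {p C : ℝ} (hp : 0 < p) (hC : 0 ≤ C) {f : Ω → ℝ}
    (hf : MemLp f (ENNReal.ofReal p) μ) :
    (∫ ω, |f ω| ^ p ∂μ) ^ (1 / p) ≤ C ↔ eLpNorm f (ENNReal.ofReal p) μ ≤ ENNReal.ofReal C := by
  rw [hf.eLpNorm_ofReal_eq hp, ENNReal.ofReal_le_ofReal_iff hC]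

theorem tendsto_integral_abs_rpow_of_tendsto_eLpNorm {p : ℝ} (hp : 0 < p) {f : ℕ → Ω → ℝ}
    (hf : ∀ n, MemLp (f n) (ENNReal.ofReal p) μ)
    (hlim : Tendsto (fun n => eLpNorm (f n) (ENNReal.ofReal p) μ) atTop (𝓝 0)) :
    Tendsto (fun n => ∫ ω, |f n ω| ^ p ∂μ) atTop (𝓝 0) := by
  have hmoment : ∀ n, ∫ ω, |f n ω| ^ p ∂μ = (eLpNorm (f n) (ENNReal.ofReal p) μ).toReal ^ p := by
    intro n
    have hnonneg : 0 ≤ ∫ ω, |f n ω| ^ p ∂μ := integral_nonneg fun ω => by positivity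
    rw [(hf n).eLpNorm_ofReal_eq hp, ENNReal.toReal_ofReal (by positivity),
      ← Real.rpow_mul hnonneg, one_div_mul_cancel hp.ne', Real.rpow_one]
  have hnorm : Tendsto (fun n => (eLpNorm (f n) (ENNReal.ofReal p) μ).toReal) atTop (𝓝 0) := by
    simpa [Function.comp_def] using (ENNReal.tendsto_toReal ENNReal.zero_ne_top).comp hlim
  simpa [hmoment, Real.zero_rpow hp.ne'] using hnorm.rpow_const (Or.inr hp.le)

section SummableIncrements

variable {E : Type*} [NormedAddCommGroup E] {p : ℝ≥0∞} {W : ℕ → Ω → E} {a : ℕ → ℝ}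

theorem eLpNorm_add_sub_le_tsum (hp : 1 ≤ p) (hW : ∀ n, AEStronglyMeasurable (W n) μ)
    (ha : ∀ n, 0 ≤ a n) (hsum : Summable a)
    (hinc : ∀ n, eLpNorm (W (n + 1) - W n) p μ ≤ ENNReal.ofReal (a n)) (m n : ℕ) :
    eLpNorm (W (m + n) - W m) p μ ≤ ENNReal.ofReal (∑' k, a (m + k)) := by
  have hpartial :
      eLpNorm (W (m + n) - W m) p μ ≤ ENNReal.ofReal (∑ k ∈ Finset.range n, a (m + k)) := by
    induction n with
    | zero => simp
    | succ n ih =>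
      calc eLpNorm (W (m + (n + 1)) - W m) p μ
          = eLpNorm ((W (m + n + 1) - W (m + n)) + (W (m + n) - W m)) p μ := by
            rw [sub_add_sub_cancel, add_assoc]
        _ ≤ eLpNorm (W (m + n + 1) - W (m + n)) p μ + eLpNorm (W (m + n) - W m) p μ :=
            eLpNorm_add_le ((hW _).sub (hW _)) ((hW _).sub (hW _)) hp
        _ ≤ ENNReal.ofReal (a (m + n)) + ENNReal.ofReal (∑ k ∈ Finset.range n, a (m + k)) :=
            add_le_add (hinc _) ih
        _ = ENNReal.ofReal (∑ k ∈ Finset.range (n + 1), a (m + k)) := by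
            rw [Finset.sum_range_succ, add_comm,
              ENNReal.ofReal_add (Finset.sum_nonneg fun k _ => ha _) (ha _)]
  exact hpartial.trans <| ENNReal.ofReal_le_ofReal <| Summable.sum_le_tsum _ (fun k _ => ha _)
    (hsum.comp_injective (add_right_injective m))

theorem exists_eLpNorm_one_le_of_summable [IsProbabilityMeasure μ] (hp : 1 ≤ p)
    (hWp : ∀ n, MemLp (W n) p μ) (ha : ∀ n, 0 ≤ a n) (hsum : Summable a)
    (hinc : ∀ n, eLpNorm (W (n + 1) - W n) p μ ≤ ENNReal.ofReal (a n)) :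
    ∃ R : ℝ≥0, ∀ n, eLpNorm (W n) 1 μ ≤ R := by
  have hW : ∀ n, AEStronglyMeasurable (W n) μ := fun n => (hWp n).1
  refine ⟨(ENNReal.ofReal (∑' k, a k) + eLpNorm (W 0) p μ).toNNReal, fun n => ?_⟩
  rw [ENNReal.coe_toNNReal (ENNReal.add_ne_top.2 ⟨ENNReal.ofReal_ne_top, (hWp 0).eLpNorm_ne_top⟩)]
  calc eLpNorm (W n) 1 μ ≤ eLpNorm (W n) p μ := eLpNorm_le_eLpNorm_of_exponent_le hp (hW n)
    _ = eLpNorm ((W n - W 0) + W 0) p μ := by rw [sub_add_cancel]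
    _ ≤ eLpNorm (W n - W 0) p μ + eLpNorm (W 0) p μ := eLpNorm_add_le ((hW n).sub (hW 0)) (hW 0) hp
    _ ≤ ENNReal.ofReal (∑' k, a k) + eLpNorm (W 0) p μ := by
        gcongr
        simpa using eLpNorm_add_sub_le_tsum hp hW ha hsum hinc 0 n

theorem eLpNorm_sub_le_of_ae_tendsto (hW : ∀ n, AEStronglyMeasurable (W n) μ) {f g : Ω → E}
    (hg : AEStronglyMeasurable g μ) (hlim : ∀ᵐ ω ∂μ, Tendsto (W · ω) atTop (𝓝 (f ω)))
    {C : ℝ≥0∞} (hle : ∀ᶠ n in atTop, eLpNorm (W n - g) p μ ≤ C) :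
    eLpNorm (f - g) p μ ≤ C :=
  calc eLpNorm (f - g) p μ ≤ liminf (fun n => eLpNorm (W n - g) p μ) atTop :=
        Lp.eLpNorm_lim_le_liminf_eLpNorm (fun n => (hW n).sub hg) _
          (hlim.mono fun ω hω => hω.sub_const (g ω))
    _ ≤ C := liminf_le_of_frequently_le hle.frequently

end SummableIncrements

theorem Martingale.exists_tendsto_of_summable_eLpNorm_sub [IsProbabilityMeasure μ]
    {ℱ : Filtration ℕ mΩ} {W : ℕ → Ω → ℝ} {p : ℝ≥0∞} {a : ℕ → ℝ} (hmart : Martingale W ℱ μ)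
    (hp : 1 ≤ p) (hWp : ∀ n, MemLp (W n) p μ) (ha : ∀ n, 0 ≤ a n) (hsum : Summable a)
    (hinc : ∀ n, eLpNorm (W (n + 1) - W n) p μ ≤ ENNReal.ofReal (a n)) :
    ∃ Winf : Ω → ℝ, MemLp Winf p μ ∧ (∀ᵐ ω ∂μ, Tendsto (W · ω) atTop (𝓝 (Winf ω))) ∧
      Tendsto (fun n => eLpNorm (W n - Winf) p μ) atTop (𝓝 0) ∧ UniformIntegrable W 1 μ ∧
      ∀ m, eLpNorm (Winf - W m) p μ ≤ ENNReal.ofReal (∑' k, a (m + k)) := by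
  have hW : ∀ n, AEStronglyMeasurable (W n) μ := fun n => (hWp n).1
  obtain ⟨R, hR⟩ := exists_eLpNorm_one_le_of_summable hp hWp ha hsum hinc
  have hlim := hmart.submartingale.ae_tendsto_limitProcess hR
  set Winf := ℱ.limitProcess W μ
  have hWinf : AEStronglyMeasurable Winf μ := aestronglyMeasurable_of_tendsto_ae atTop hW hlim
  have htail : ∀ m, eLpNorm (Winf - W m) p μ ≤ ENNReal.ofReal (∑' k, a (m + k)) := by
    refine fun m => eLpNorm_sub_le_of_ae_tendsto hW (hW m) hlim ?_
    filter_upwards [eventually_ge_atTop m] with n hn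
    obtain ⟨k, rfl⟩ := Nat.exists_eq_add_of_le hn
    exact eLpNorm_add_sub_le_tsum hp hW ha hsum hinc m k
  have hWinfp : MemLp Winf p μ := by
    have hsub : MemLp (Winf - W 0) p μ :=
      ⟨hWinf.sub (hW 0), (htail 0).trans_lt ENNReal.ofReal_lt_top⟩
    simpa using hsub.add (hWp 0)
  have hLp : Tendsto (fun n => eLpNorm (W n - Winf) p μ) atTop (𝓝 0) := by
    have htail_lim : Tendsto (fun m => ENNReal.ofReal (∑' k, a (m + k))) atTop (𝓝 0) := by
      simpa [add_comm] using ENNReal.tendsto_ofReal (tendsto_sum_nat_add a)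
    refine tendsto_of_tendsto_of_tendsto_of_le_of_le tendsto_const_nhds htail_lim
      (fun _ => bot_le) fun n => ?_
    rw [eLpNorm_sub_comm]
    exact htail n
  have hL1 : Tendsto (fun n => eLpNorm (W n - Winf) 1 μ) atTop (𝓝 0) :=
    tendsto_of_tendsto_of_tendsto_of_le_of_le tendsto_const_nhds hLp (fun _ => bot_le)
      fun n => eLpNorm_le_eLpNorm_of_exponent_le hp ((hW n).sub hWinf)
  have hUI : UniformIntegrable W 1 μ :=
    ⟨hW, unifIntegrable_of_tendsto_Lp le_rfl ENNReal.one_ne_top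
      (fun n => (hWp n).mono_exponent hp) (hWinfp.mono_exponent hp) hL1, R, hR⟩
  exact ⟨Winf, hWinfp, hlim, hLp, hUI, htail⟩

end MeasureTheory

noncomputable def normalizedProcess (θ : ℝ) (Z : ℕ → Ω → ℝ) : ℕ → Ω → ℝ :=
  fun n ω => (θ ^ n)⁻¹ * Z n ω

theorem martingale_normalizedProcess [IsFiniteMeasure μ] {ℱ : Filtration ℕ mΩ}
    {Z : ℕ → Ω → ℝ} {θ : ℝ} (hθ : θ ≠ 0) (hZ : StronglyAdapted ℱ Z)
    (hint : ∀ n, Integrable (Z n) μ) (hcond : ∀ n, μ[Z (n + 1) | ℱ n] =ᵐ[μ] fun ω => θ * Z n ω) :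
    Martingale (normalizedProcess θ Z) ℱ μ := by
  refine martingale_nat (fun n => (hZ n).const_mul _) (fun n => (hint n).const_mul _) fun n => ?_
  have hscale : normalizedProcess θ Z (n + 1) = (θ ^ (n + 1))⁻¹ • Z (n + 1) := rfl
  filter_upwards [condExp_smul (θ ^ (n + 1))⁻¹ (Z (n + 1)) (ℱ n), hcond n] with ω hω hZω
  rw [hscale, hω, Pi.smul_apply, hZω, smul_eq_mul, normalizedProcess, pow_succ]
  field_simp

theorem eLpNorm_normalizedProcess_succ_sub_le {Z : ℕ → Ω → ℝ} {θ : ℝ} (hθ : 0 < θ)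
    {p : ℝ≥0∞} {b : ℝ} {n : ℕ}
    (hb : eLpNorm (fun ω => Z (n + 1) ω - θ * Z n ω) p μ ≤ ENNReal.ofReal b) :
    eLpNorm (normalizedProcess θ Z (n + 1) - normalizedProcess θ Z n) p μ
      ≤ ENNReal.ofReal (b / θ ^ (n + 1)) := by
  have hc : 0 < (θ ^ (n + 1))⁻¹ := by positivity
  have hdiff : normalizedProcess θ Z (n + 1) - normalizedProcess θ Z n
      = (θ ^ (n + 1))⁻¹ • fun ω => Z (n + 1) ω - θ * Z n ω := by
    ext ω
    simp only [normalizedProcess, Pi.sub_apply, Pi.smul_apply, smul_eq_mul, pow_succ]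
    field_simp
  rw [hdiff, eLpNorm_const_smul, Real.enorm_of_nonneg hc.le, div_eq_inv_mul,
    ENNReal.ofReal_mul hc.le]
  gcongr

end

theorem biggins_martingale_Lp_convergence_general
    {X : Type*} [MeasurableSpace X] (Q : Kernel X X)
    (p : ℝ) (hp1 : 1 < p)
    (θ₁ : ℝ) (hθ₁ : 0 < θ₁)
    (c₀ : ℝ) (hc₀ : 0 < c₀) (M : ℝ) (hM : 0 ≤ M)
    (ψ₁ : X → ℝ)
    (γ : ℕ → ℝ) (hγnonneg : ∀ n, 0 ≤ γ n) (hγsum : Summable γ)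
    {Ω : Type*} {mΩ : MeasurableSpace Ω} (μ : Measure Ω) [IsProbabilityMeasure μ]
    (ℱ : Filtration ℕ mΩ) (G : ℕ → Ω → Measure X)
    -- (a) adaptedness and `L^p` integrability of `G_n g`
    (ha : ∀ g : X → ℝ, Measurable g → psiNorm ψ₁ g < ⊤ → ∀ n : ℕ,
      StronglyMeasurable[ℱ n] (fun ω => ∫ y, g y ∂(G n ω)) ∧
      MemLp (fun ω => ∫ y, g y ∂(G n ω)) (ENNReal.ofReal p) μ)
    -- (b) one-step mean identity: `E[G_{n+1} g ∣ ℱ_n] = G_n (Q g)` a.s.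
    (hb : ∀ g : X → ℝ, Measurable g → psiNorm ψ₁ g < ⊤ → ∀ n : ℕ,
      μ[fun ω => ∫ y, g y ∂(G (n + 1) ω) | ℱ n]
        =ᵐ[μ] fun ω => ∫ x, (∫ y, g y ∂(Q x)) ∂(G n ω))
    -- (c) `L^p` dispersion bound
    (hc : ∀ g : X → ℝ, Measurable g → psiNorm ψ₁ g < ⊤ → ∀ n : ℕ,
      (∫ ω, |(∫ y, g y ∂(G (n + 1) ω)) - ∫ x, (∫ y, g y ∂(Q x)) ∂(G n ω)| ^ p ∂μ) ^ (1 / p)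
        ≤ c₀ * γ n * θ₁ ^ n * M * (psiNorm ψ₁ g).toReal)
    -- `η` : right eigenfunction of `Q` for `θ₁`, with finite `ψ₁`-norm
    (η : X → ℝ) (hηmeas : Measurable η) (hηnorm : psiNorm ψ₁ η < ⊤)
    (hηeigen : ∀ x, ∫ y, η y ∂(Q x) = θ₁ * η x) :
    Martingale (fun n ω => (θ₁ ^ n)⁻¹ * ∫ y, η y ∂(G n ω)) ℱ μ ∧
    (∀ m n : ℕ,
      (∫ ω, |(θ₁ ^ (m + n))⁻¹ * (∫ y, η y ∂(G (m + n) ω))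
          - (θ₁ ^ m)⁻¹ * (∫ y, η y ∂(G m ω))| ^ p ∂μ) ^ (1 / p)
        ≤ c₀ * θ₁⁻¹ * M * (psiNorm ψ₁ η).toReal * ∑' k : ℕ, γ (m + k)) ∧
    UniformIntegrable (fun n ω => (θ₁ ^ n)⁻¹ * ∫ y, η y ∂(G n ω)) 1 μ ∧
    ∃ Winf : Ω → ℝ, MemLp Winf (ENNReal.ofReal p) μ ∧
      (∀ᵐ ω ∂μ, Tendsto (fun n => (θ₁ ^ n)⁻¹ * ∫ y, η y ∂(G n ω)) atTop (nhds (Winf ω))) ∧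
      Tendsto (fun n => ∫ ω, |(θ₁ ^ n)⁻¹ * (∫ y, η y ∂(G n ω)) - Winf ω| ^ p ∂μ)
        atTop (nhds 0) ∧
      ∀ m : ℕ,
        (∫ ω, |Winf ω - (θ₁ ^ m)⁻¹ * (∫ y, η y ∂(G m ω))| ^ p ∂μ) ^ (1 / p)
          ≤ c₀ * θ₁⁻¹ * M * (psiNorm ψ₁ η).toReal * ∑' k : ℕ, γ (m + k) := by
  have hp0 : 0 < p := zero_lt_one.trans hp1
  have hp : 1 ≤ ENNReal.ofReal p := by simpa using ENNReal.ofReal_le_ofReal hp1.le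
  set Z : ℕ → Ω → ℝ := fun n ω => ∫ y, η y ∂(G n ω)
  have hQZ : ∀ n ω, ∫ x, (∫ y, η y ∂(Q x)) ∂(G n ω) = θ₁ * Z n ω := fun n ω => by
    simp_rw [hηeigen]
    exact integral_const_mul θ₁ η
  have hZp : ∀ n, MemLp (Z n) (ENNReal.ofReal p) μ := fun n => (ha η hηmeas hηnorm n).2
  set W := normalizedProcess θ₁ Z
  have hWp : ∀ n, MemLp (W n) (ENNReal.ofReal p) μ := fun n => (hZp n).const_mul _
  have hmart : Martingale W ℱ μ :=
    martingale_normalizedProcess hθ₁.ne' (fun n => (ha η hηmeas hηnorm n).1)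
      (fun n => (hZp n).integrable hp) fun n => by simpa only [hQZ] using hb η hηmeas hηnorm n
  set K := c₀ * θ₁⁻¹ * M * (psiNorm ψ₁ η).toReal
  have hK : 0 ≤ K := by positivity
  have hinc : ∀ n, eLpNorm (W (n + 1) - W n) (ENNReal.ofReal p) μ ≤ ENNReal.ofReal (K * γ n) := by
    intro n
    have hdisp := hc η hηmeas hηnorm n
    simp only [hQZ] at hdisp
    have hZinc := ((hZp (n + 1)).sub ((hZp n).const_mul θ₁)).rpow_integral_abs_rpow_le_iff hp0
      (by have := hγnonneg n; positivity) |>.1 hdisp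
    convert eLpNorm_normalizedProcess_succ_sub_le hθ₁ hZinc using 2
    simp only [K]
    field_simp
    ring
  have hKγ : ∀ n, 0 ≤ K * γ n := fun n => mul_nonneg hK (hγnonneg n)
  have hCauchy := eLpNorm_add_sub_le_tsum hp (fun n => (hWp n).1) hKγ (hγsum.mul_left K) hinc
  obtain ⟨Winf, hWinf, hae, hLp, hUI, htail⟩ :=
    hmart.exists_tendsto_of_summable_eLpNorm_sub hp hWp hKγ (hγsum.mul_left K) hinc
  have hΓ : ∀ m, 0 ≤ K * ∑' k, γ (m + k) := fun m => mul_nonneg hK (tsum_nonneg fun k => hγnonneg _)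
  refine ⟨hmart, fun m n => ?_, hUI, Winf, hWinf, hae,
    tendsto_integral_abs_rpow_of_tendsto_eLpNorm hp0 (fun n => (hWp n).sub hWinf) hLp, fun m => ?_⟩
  · refine ((hWp (m + n)).sub (hWp m)).rpow_integral_abs_rpow_le_iff hp0 (hΓ m) |>.2 ?_
    simpa only [tsum_mul_left] using hCauchy m n
  · refine (hWinf.sub (hWp m)).rpow_integral_abs_rpow_le_iff hp0 (hΓ m) |>.2 ?_
    simpa only [tsum_mul_left] using htail m

/-- the Biggins martingale `W_n = θ₁^{-n} G_n(η)` is an `L^p`-Cauchy,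
uniformly integrable martingale converging a.s. and in `L^p` to a limit `W_∞`, with
quantitative `L^p` estimates (Step 3 of the proof of Theorem 1). -/
theorem biggins_martingale_Lp_convergence
    {X : Type*} [MeasurableSpace X] (Q : Kernel X X) [IsSFiniteKernel Q]
    (p : ℝ) (hp1 : 1 < p) (hp2 : p ≤ 2)
    (θ₁ : ℝ) (hθ₁ : 0 < θ₁)
    (c₀ : ℝ) (hc₀ : 0 < c₀) (M : ℝ) (hM : 0 ≤ M)
    (ψ₁ : X → ℝ) (hψ₁meas : Measurable ψ₁) (hψ₁pos : ∀ x, 0 < ψ₁ x)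
    (γ : ℕ → ℝ) (hγnonneg : ∀ n, 0 ≤ γ n) (hγsum : Summable γ)
    {Ω : Type*} {mΩ : MeasurableSpace Ω} (μ : Measure Ω) [IsProbabilityMeasure μ]
    (ℱ : Filtration ℕ mΩ) (G : ℕ → Ω → Measure X)
    -- (a) adaptedness and `L^p` integrability of `G_n g`
    (ha : ∀ g : X → ℝ, Measurable g → psiNorm ψ₁ g < ⊤ → ∀ n : ℕ,
      StronglyMeasurable[ℱ n] (fun ω => ∫ y, g y ∂(G n ω)) ∧
      MemLp (fun ω => ∫ y, g y ∂(G n ω)) (ENNReal.ofReal p) μ)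
    -- (b) one-step mean identity: `E[G_{n+1} g ∣ ℱ_n] = G_n (Q g)` a.s.
    (hb : ∀ g : X → ℝ, Measurable g → psiNorm ψ₁ g < ⊤ → ∀ n : ℕ,
      μ[fun ω => ∫ y, g y ∂(G (n + 1) ω) | ℱ n]
        =ᵐ[μ] fun ω => ∫ x, (∫ y, g y ∂(Q x)) ∂(G n ω))
    -- (c) `L^p` dispersion bound
    (hc : ∀ g : X → ℝ, Measurable g → psiNorm ψ₁ g < ⊤ → ∀ n : ℕ,
      (∫ ω, |(∫ y, g y ∂(G (n + 1) ω)) - ∫ x, (∫ y, g y ∂(Q x)) ∂(G n ω)| ^ p ∂μ) ^ (1 / p)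
        ≤ c₀ * γ n * θ₁ ^ n * M * (psiNorm ψ₁ g).toReal)
    -- `η` : right eigenfunction of `Q` for `θ₁`, with finite `ψ₁`-norm
    (η : X → ℝ) (hηmeas : Measurable η) (hηnorm : psiNorm ψ₁ η < ⊤)
    (hηeigen : ∀ x, ∫ y, η y ∂(Q x) = θ₁ * η x) :
    Martingale (fun n ω => (θ₁ ^ n)⁻¹ * ∫ y, η y ∂(G n ω)) ℱ μ ∧
    (∀ m n : ℕ,
      (∫ ω, |(θ₁ ^ (m + n))⁻¹ * (∫ y, η y ∂(G (m + n) ω))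
          - (θ₁ ^ m)⁻¹ * (∫ y, η y ∂(G m ω))| ^ p ∂μ) ^ (1 / p)
        ≤ c₀ * θ₁⁻¹ * M * (psiNorm ψ₁ η).toReal * ∑' k : ℕ, γ (m + k)) ∧
    UniformIntegrable (fun n ω => (θ₁ ^ n)⁻¹ * ∫ y, η y ∂(G n ω)) 1 μ ∧
    ∃ Winf : Ω → ℝ, MemLp Winf (ENNReal.ofReal p) μ ∧
      (∀ᵐ ω ∂μ, Tendsto (fun n => (θ₁ ^ n)⁻¹ * ∫ y, η y ∂(G n ω)) atTop (nhds (Winf ω))) ∧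
      Tendsto (fun n => ∫ ω, |(θ₁ ^ n)⁻¹ * (∫ y, η y ∂(G n ω)) - Winf ω| ^ p ∂μ)
        atTop (nhds 0) ∧
      ∀ m : ℕ,
        (∫ ω, |Winf ω - (θ₁ ^ m)⁻¹ * (∫ y, η y ∂(G m ω))| ^ p ∂μ) ^ (1 / p)
          ≤ c₀ * θ₁⁻¹ * M * (psiNorm ψ₁ η).toReal * ∑' k : ℕ, γ (m + k) :=
  biggins_martingale_Lp_convergence_general Q p hp1 θ₁ hθ₁ c₀ hc₀ M hM ψ₁ γ hγnonneg hγsum μ ℱ G ha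
    hb hc η hηmeas hηnorm hηeigen
end

section
/- If there exists p ∈ (1,2] such that E[(Σ_{i∈ℕ} u_i)·log_+(Σ_{i∈ℕ} u_i)] < ∞ and E[Σ_{i∈ℕ} u_i^p] < 1, then the nonnegative martingale (W_n)_{n≥0} is uniformly integrable. -/
/-!
Truncation. Delete all offspring of a vertex `e` of generation `k` as soon as their total weight
`L(e) · ∑ᵢ U_e(i)` exceeds a threshold `c k`. The truncated masses `T_n ≤ W_n` satisfy
`E[T_{n+1}²] ≤ E[T_n²] + c n`, because distinct vertices of one generation have independent
offspring and a kept offspring mass is at most `c n`; so `(T_n)` is bounded in `L²` once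
`∑ c k < ∞`. On the other hand `E[W_n - T_n]` is the expected mass deleted in generations `< n`.
If `c k = b_k r_k`, a vertex of weight `l` loses its offspring only if `l > b_k` or
`∑ᵢ U_e(i) > r_k`, so generation `k` loses at most `E[S; S > r_k] + b_k^{1-p} E[∑ᵢ uᵢ^p]^k`,
where `S = ∑ᵢ uᵢ`. With `b_k = B θ^k`, `r_k = B ρ^k`, `E[∑ᵢ uᵢ^p] < θ^{p-1}`, `ρ > 1` and `θρ < 1`,
the first terms sum to at most `E[S (log_ρ S + 1); S > B]`, small by the `L log L` condition,
and the second ones to a multiple of `B^{1-p}`. So for every `ε` the martingale is uniformly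
`ε`-close in `L¹` to an `L²`-bounded family, and a Cauchy–Schwarz and Markov bound on
`E[W_n; W_n ≥ C]` gives uniform integrability.
-/

open MeasureTheory ProbabilityTheory Filter

/-- The weight `L(e) = ∏_{k=1}^{|e|} U_{e₁…e_{k−1}}(e_k)` of a word `e` in the
Mandelbrot cascade built from the family `U`. -/
noncomputable def cascadeWeight {Ω : Type*} (U : List ℕ → Ω → ℕ → NNReal)
    (e : List ℕ) (ω : Ω) : NNReal :=
  ∏ k ∈ Finset.range e.length, U (e.take k) ω (e.getD k 0)

/-- The total mass `W_n = ∑_{e ∈ ℕ^n} L(e)` of generation `n`, valued in `[0,∞]`. -/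
noncomputable def cascadeMass {Ω : Type*} (U : List ℕ → Ω → ℕ → NNReal)
    (n : ℕ) (ω : Ω) : ENNReal :=
  ∑' e : {l : List ℕ // l.length = n}, (cascadeWeight U (e : List ℕ) ω : ENNReal)

open scoped ENNReal NNReal Topology

noncomputable section

namespace MandelbrotCascade

section Probability

variable {Ω ι α β : Type*} {mΩ : MeasurableSpace Ω} [MeasurableSpace α] [MeasurableSpace β]
  {μ : Measure Ω}

abbrev sigmaCoords (U : ι → Ω → α) (s : Set ι) : MeasurableSpace Ω :=
  ⨆ i ∈ s, MeasurableSpace.comap (U i) inferInstance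

lemma sigmaCoords_mono (U : ι → Ω → α) {s t : Set ι} (hst : s ⊆ t) :
    sigmaCoords U s ≤ sigmaCoords U t :=
  biSup_mono hst

lemma sigmaCoords_le {U : ι → Ω → α} (hU : ∀ i, Measurable (U i)) (s : Set ι) :
    sigmaCoords U s ≤ mΩ :=
  iSup₂_le fun i _ => (hU i).comap_le

lemma measurable_sigmaCoords {U : ι → Ω → α} {s : Set ι} {i : ι} (hi : i ∈ s) :
    Measurable[sigmaCoords U s] (U i) :=
  measurable_iff_comap_le.2 (le_biSup (fun j => MeasurableSpace.comap (U j) inferInstance) hi)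

lemma indepFun_of_measurable_sigmaCoords {U : ι → Ω → α} (hU : ∀ i, Measurable (U i))
    (hindep : iIndepFun U μ) {s : Set ι} {i : ι} (hi : i ∉ s) {F : Ω → β}
    (hF : Measurable[sigmaCoords U s] F) : IndepFun F (U i) μ := by
  rw [IndepFun_iff_Indep]
  have h := indep_iSup_of_disjoint (fun j => (hU j).comap_le) hindep.iIndep
    (Set.disjoint_singleton_right.2 hi)
  refine indep_of_indep_of_le h (measurable_iff_comap_le.1 hF) ?_
  exact measurable_iff_comap_le.1 (measurable_sigmaCoords (Set.mem_singleton i))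

lemma _root_.ProbabilityTheory.IndepFun.lintegral_comp [IsFiniteMeasure μ] {F : Ω → β}
    {X : Ω → α} (h : IndepFun F X μ) (hF : Measurable F) (hX : Measurable X)
    {Φ : β → α → ℝ≥0∞} (hΦ : Measurable (Function.uncurry Φ)) :
    ∫⁻ ω, Φ (F ω) (X ω) ∂μ = ∫⁻ ω, ∫⁻ x, Φ (F ω) x ∂(μ.map X) ∂μ := by
  have hmap : μ.map (fun ω => (F ω, X ω)) = (μ.map F).prod (μ.map X) :=
    (indepFun_iff_map_prod_eq_prod_map_map hF.aemeasurable hX.aemeasurable).1 h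
  calc ∫⁻ ω, Φ (F ω) (X ω) ∂μ = ∫⁻ q, Function.uncurry Φ q ∂((μ.map F).prod (μ.map X)) := by
        rw [← hmap, lintegral_map hΦ (hF.prodMk hX)]; rfl
    _ = ∫⁻ ω, ∫⁻ x, Φ (F ω) x ∂(μ.map X) ∂μ := by
        rw [lintegral_prod _ hΦ.aemeasurable]; exact lintegral_map hΦ.lintegral_prod_right hF

lemma lintegral_comp_eq_of_notMem [IsFiniteMeasure μ] {U : ι → Ω → α} (hU : ∀ i, Measurable (U i))
    (hindep : iIndepFun U μ) {s : Set ι} {i : ι} (hi : i ∉ s) {F : Ω → β}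
    (hF : Measurable[sigmaCoords U s] F) {Φ : β → α → ℝ≥0∞} (hΦ : Measurable (Function.uncurry Φ)) :
    ∫⁻ ω, Φ (F ω) (U i ω) ∂μ = ∫⁻ ω, ∫⁻ x, Φ (F ω) x ∂(μ.map (U i)) ∂μ :=
  (indepFun_of_measurable_sigmaCoords hU hindep hi hF).lintegral_comp
    (hF.mono (sigmaCoords_le hU s) le_rfl) (hU i) hΦ

end Probability

lemma _root_.ENNReal.tsum_mul_tsum {ι κ : Type*} (f : ι → ℝ≥0∞) (g : κ → ℝ≥0∞) :
    (∑' i, f i) * ∑' j, g j = ∑' q : ι × κ, f q.1 * g q.2 := by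
  rw [ENNReal.tsum_prod', ← ENNReal.tsum_mul_right]
  exact tsum_congr fun i => ENNReal.tsum_mul_left.symm

section Integrals

variable {Ω ι : Type*} {mΩ : MeasurableSpace Ω} {μ : Measure Ω}

lemma setLIntegral_le_rpow_lintegral_sq_mul {g : Ω → ℝ≥0∞} (hg : Measurable g) (s : Set Ω) :
    ∫⁻ ω in s, g ω ∂μ ≤ ((∫⁻ ω, g ω ^ 2 ∂μ) * μ s) ^ (1 / 2 : ℝ) := by
  have h := ENNReal.lintegral_mul_le_Lp_mul_Lq (μ.restrict s) Real.HolderConjugate.two_two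
    hg.aemeasurable (aemeasurable_const (b := (1 : ℝ≥0∞)))
  simp only [Pi.mul_apply, mul_one, lintegral_const, Measure.restrict_apply_univ,
    ENNReal.rpow_two, one_pow, one_mul] at h
  rw [ENNReal.mul_rpow_of_nonneg _ _ (by norm_num)]
  exact h.trans (by gcongr; exact Measure.restrict_le_self)

lemma setLIntegral_le_lintegral_sub_add {f g : Ω → ℝ≥0∞} (hf : Measurable f) (hg : Measurable g)
    {C : ℝ≥0∞} (hC : C ≠ 0) (hC' : C ≠ ⊤) :
    ∫⁻ ω in {ω | C ≤ f ω}, f ω ∂μ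
      ≤ ∫⁻ ω, f ω - g ω ∂μ + ((∫⁻ ω, g ω ^ 2 ∂μ) * ((∫⁻ ω, f ω ∂μ) / C)) ^ (1 / 2 : ℝ) := by
  set s := {ω | C ≤ f ω}
  calc ∫⁻ ω in s, f ω ∂μ ≤ ∫⁻ ω in s, (f ω - g ω) + g ω ∂μ :=
        setLIntegral_mono' (measurableSet_le measurable_const hf) fun ω _ => le_tsub_add
    _ = ∫⁻ ω in s, f ω - g ω ∂μ + ∫⁻ ω in s, g ω ∂μ := lintegral_add_right _ hg
    _ ≤ ∫⁻ ω, f ω - g ω ∂μ + ((∫⁻ ω, g ω ^ 2 ∂μ) * μ s) ^ (1 / 2 : ℝ) :=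
        add_le_add (setLIntegral_le_lintegral s _) (setLIntegral_le_rpow_lintegral_sq_mul hg s)
    _ ≤ _ := by gcongr; exact meas_ge_le_lintegral_div hf.aemeasurable hC hC'

lemma exists_setLIntegral_le_lintegral_sub_add {M δ : ℝ≥0∞} (hM : M ≠ ⊤) (hδ : 0 < δ) :
    ∃ C : ℝ≥0, ∀ {f g : Ω → ℝ≥0∞}, Measurable f → Measurable g →
      ∫⁻ ω, f ω ∂μ ≤ 1 → ∫⁻ ω, g ω ^ 2 ∂μ ≤ M →
      ∫⁻ ω in {ω | C ≤ f ω}, f ω ∂μ ≤ ∫⁻ ω, f ω - g ω ∂μ + δ := by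
  have hlim : Tendsto (fun n : ℕ => (M * (1 / (n : ℝ≥0∞))) ^ (1 / 2 : ℝ)) atTop (𝓝 0) := by
    have hinv : Tendsto (fun n : ℕ => M * (n : ℝ≥0∞)⁻¹) atTop (𝓝 0) := by
      simpa using ENNReal.Tendsto.const_mul ENNReal.tendsto_inv_nat_nhds_zero (Or.inr hM)
    have h := (ENNReal.continuous_rpow_const (y := 1 / 2)).tendsto 0 |>.comp hinv
    simpa [Function.comp_def] using h
  obtain ⟨n, hn, hn0⟩ := ((hlim.eventually (gt_mem_nhds hδ)).and (eventually_ne_atTop 0)).exists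
  refine ⟨n, fun hf hg hf1 hg2 => ?_⟩
  refine (setLIntegral_le_lintegral_sub_add hf hg (by simpa using hn0) (by simp)).trans ?_
  gcongr
  exact le_trans (by gcongr; simp) hn.le

lemma lintegral_tsum_sq {κ : Type*} [Countable κ] {Y : κ → Ω → ℝ≥0∞} (hY : ∀ i, Measurable (Y i)) :
    ∫⁻ ω, (∑' i, Y i ω) ^ 2 ∂μ = ∑' q : κ × κ, ∫⁻ ω, Y q.1 ω * Y q.2 ω ∂μ := by
  simp_rw [sq, ENNReal.tsum_mul_tsum]
  exact lintegral_tsum fun q => ((hY q.1).mul (hY q.2)).aemeasurable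

lemma uniformIntegrable_toReal_of_setLIntegral_le [IsFiniteMeasure μ] {f : ι → Ω → ℝ≥0∞}
    (hf : ∀ i, Measurable (f i))
    (h : ∀ ε : ℝ≥0∞, 0 < ε → ∃ C : ℝ≥0, ∀ i, ∫⁻ ω in {ω | C ≤ f i ω}, f i ω ∂μ ≤ ε) :
    UniformIntegrable (fun i ω => (f i ω).toReal) 1 μ := by
  refine uniformIntegrable_of le_rfl ENNReal.one_ne_top
    (fun i => (hf i).ennreal_toReal.aestronglyMeasurable) fun ε hε => ?_
  obtain ⟨C, hC⟩ := h (ENNReal.ofReal ε) (ENNReal.ofReal_pos.2 hε)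
  refine ⟨C, fun i => ?_⟩
  rw [eLpNorm_one_eq_lintegral_enorm]
  have hCi := hC i
  rw [← lintegral_indicator (measurableSet_le measurable_const (hf i))] at hCi
  refine le_trans (lintegral_mono fun ω => ?_) hCi
  have hnorm : ‖(f i ω).toReal‖ₑ ≤ f i ω := by
    rw [Real.enorm_eq_ofReal ENNReal.toReal_nonneg]
    exact ENNReal.ofReal_toReal_le
  by_cases hω : ω ∈ {x | C ≤ ‖(f i x).toReal‖₊}
  · have hC : (C : ℝ≥0∞) ≤ f i ω := le_trans (by exact_mod_cast hω) hnorm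
    rw [Set.indicator_of_mem hω, Set.indicator_of_mem (show ω ∈ {x | (C : ℝ≥0∞) ≤ f i x} from hC)]
    exact hnorm
  · simp [Set.indicator_of_notMem hω]

end Integrals

lemma tsum_indicator_pow_lt_le {ρ : ℝ} (hρ : 1 < ρ) (x : ℝ) :
    ∑' k : ℕ, {k : ℕ | ρ ^ k < x}.indicator (1 : ℕ → ℝ≥0∞) k
      ≤ ENNReal.ofReal (Real.log x / Real.log ρ) + 1 := by
  set z := Real.log x / Real.log ρ
  have hsub : {k : ℕ | ρ ^ k < x} ⊆ ↑(Finset.range (⌊z⌋₊ + 1)) := by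
    intro k (hk : ρ ^ k < x)
    have hlog : k * Real.log ρ < Real.log x := by
      rw [← Real.log_pow]
      exact Real.log_lt_log (by positivity) hk
    have hkz : (k : ℝ) ≤ z := ((lt_div_iff₀ (Real.log_pos hρ)).2 hlog).le
    simpa [Nat.lt_succ_iff] using Nat.le_floor hkz
  calc ∑' k : ℕ, {k : ℕ | ρ ^ k < x}.indicator (1 : ℕ → ℝ≥0∞) k
      ≤ ∑' k : ℕ, (↑(Finset.range (⌊z⌋₊ + 1)) : Set ℕ).indicator 1 k :=
        ENNReal.tsum_le_tsum fun k => Set.indicator_le_indicator_of_subset hsub (by simp) k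
    _ = ⌊z⌋₊ + 1 := by
        rw [← tsum_subtype, Finset.tsum_subtype' (Finset.range _) (1 : ℕ → ℝ≥0∞)]
        simp
    _ ≤ ENNReal.ofReal z + 1 := by
        gcongr
        rcases le_total 0 z with hz | hz
        · rw [← ENNReal.ofReal_natCast]
          exact ENNReal.ofReal_le_ofReal (Nat.floor_le hz)
        · simp [Nat.floor_of_nonpos hz]

lemma tsum_indicator_mul_pow_lt_le {ρ : ℝ≥0} (hρ : 1 < ρ) {B x : ℝ≥0∞} (hB : 1 ≤ B) (hx : x ≠ ⊤) :
    ∑' k : ℕ, {k : ℕ | B * ρ ^ k < x}.indicator (1 : ℕ → ℝ≥0∞) k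
      ≤ {y | B < y}.indicator (fun y => ENNReal.ofReal (Real.log y.toReal / Real.log ρ) + 1) x := by
  have hρk (k : ℕ) : 1 ≤ (ρ : ℝ≥0∞) ^ k := one_le_pow₀ (by exact_mod_cast hρ.le)
  by_cases hBx : B < x
  · rw [Set.indicator_of_mem (show x ∈ {y | B < y} from hBx)]
    refine le_trans
      (ENNReal.tsum_le_tsum fun k => Set.indicator_le_indicator_of_subset ?_ (by simp) k)
      (tsum_indicator_pow_lt_le (by exact_mod_cast hρ) x.toReal)
    intro k (hk : B * ρ ^ k < x)
    have : ((ρ ^ k : ℝ≥0) : ℝ≥0∞) < x := by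
      push_cast
      exact lt_of_le_of_lt (le_mul_of_one_le_left zero_le hB) hk
    show (ρ : ℝ) ^ k < x.toReal
    simpa using (ENNReal.toReal_lt_toReal ENNReal.coe_ne_top hx).2 this
  · rw [Set.indicator_of_notMem (show x ∉ {y | B < y} from hBx)]
    refine le_of_eq (ENNReal.tsum_eq_zero.2 fun k => Set.indicator_of_notMem ?_ _)
    exact fun hk : B * ρ ^ k < x => hBx (lt_of_le_of_lt (le_mul_of_one_le_right zero_le (hρk k)) hk)

lemma tendsto_setLIntegral_lt_atTop {α : Type*} [MeasurableSpace α] {ν : Measure α}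
    {X G : α → ℝ≥0∞} (hX : Measurable X) (hXfin : ∀ᵐ a ∂ν, X a ≠ ⊤) (hG : Measurable G)
    (hGfin : ∫⁻ a, G a ∂ν ≠ ⊤) :
    Tendsto (fun B : ℕ => ∫⁻ a in {a | (B : ℝ≥0∞) < X a}, G a ∂ν) atTop (𝓝 0) := by
  have hs (B : ℕ) : MeasurableSet {a | (B : ℝ≥0∞) < X a} := measurableSet_lt measurable_const hX
  simp_rw [← lintegral_indicator (hs _)]
  have hlim : ∀ᵐ a ∂ν, Tendsto (fun B : ℕ => {a | (B : ℝ≥0∞) < X a}.indicator G a)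
      atTop (𝓝 0) := by
    filter_upwards [hXfin] with a ha
    obtain ⟨n, hn⟩ := ENNReal.exists_nat_gt ha
    refine tendsto_const_nhds.congr' ?_
    filter_upwards [eventually_ge_atTop n] with B hB
    refine (Set.indicator_of_notMem (s := {a | (B : ℝ≥0∞) < X a}) (a := a)
      (fun h : (B : ℝ≥0∞) < X a => ?_) G).symm
    exact lt_asymm hn (lt_of_le_of_lt (by exact_mod_cast hB) h)
  simpa using tendsto_lintegral_filter_of_dominated_convergence G
    (Eventually.of_forall fun B => hG.indicator (hs B))
    (Eventually.of_forall fun B => Eventually.of_forall (Set.indicator_le_self _ G)) hGfin hlim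

lemma tendsto_tsum_setLIntegral_mul_pow_lt {α : Type*} [MeasurableSpace α] {ν : Measure α}
    {X : α → ℝ≥0∞} (hX : Measurable X) (hint : ∫⁻ a, X a ∂ν ≠ ⊤)
    (hlog : ∫⁻ a, X a * ENNReal.ofReal (Real.log (X a).toReal) ∂ν ≠ ⊤) {ρ : ℝ≥0} (hρ : 1 < ρ) :
    Tendsto (fun B : ℕ => ∑' k : ℕ, ∫⁻ a in {a | (B : ℝ≥0∞) * ρ ^ k < X a}, X a ∂ν)
      atTop (𝓝 0) := by
  set N : ℝ≥0∞ → ℝ≥0∞ := fun y => ENNReal.ofReal (Real.log y.toReal / Real.log ρ) + 1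
  have hlogρ : 0 < Real.log ρ := Real.log_pos (by exact_mod_cast hρ)
  have hN : Measurable N := by unfold N; fun_prop
  have hXN_fin : ∫⁻ a, X a * N (X a) ∂ν ≠ ⊤ := by
    have h (a : α) : X a * N (X a)
        = X a * ENNReal.ofReal (Real.log (X a).toReal) * (ENNReal.ofReal (Real.log ρ))⁻¹ + X a := by
      dsimp only [N]
      rw [ENNReal.ofReal_div_of_pos hlogρ, mul_add, mul_one, div_eq_mul_inv, mul_assoc]
    have hinv : (ENNReal.ofReal (Real.log ρ))⁻¹ ≠ ⊤ :=
      ENNReal.inv_ne_top.2 (ENNReal.ofReal_pos.2 hlogρ).ne'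
    simp_rw [h]
    rw [lintegral_add_right _ hX, lintegral_mul_const' _ _ hinv]
    exact ENNReal.add_ne_top.2 ⟨ENNReal.mul_ne_top hlog hinv, hint⟩
  have hXfin : ∀ᵐ a ∂ν, X a ≠ ⊤ := (ae_lt_top hX hint).mono fun a => ne_of_lt
  refine tendsto_of_tendsto_of_tendsto_of_le_of_le' tendsto_const_nhds
    (tendsto_setLIntegral_lt_atTop hX hXfin (hX.mul (hN.comp hX)) hXN_fin)
    (Eventually.of_forall fun _ => zero_le) ?_
  filter_upwards [eventually_ge_atTop 1] with B hB
  have hs (k : ℕ) : MeasurableSet {a | (B : ℝ≥0∞) * ρ ^ k < X a} :=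
    measurableSet_lt measurable_const hX
  calc ∑' k : ℕ, ∫⁻ a in {a | (B : ℝ≥0∞) * ρ ^ k < X a}, X a ∂ν
      = ∫⁻ a, X a * ∑' k : ℕ, {k : ℕ | (B : ℝ≥0∞) * ρ ^ k < X a}.indicator 1 k ∂ν := by
        simp_rw [← lintegral_indicator (hs _)]
        rw [← lintegral_tsum fun k => (hX.indicator (hs k)).aemeasurable]
        refine lintegral_congr fun a => ?_
        rw [← ENNReal.tsum_mul_left]
        refine tsum_congr fun k => ?_
        by_cases h : (B : ℝ≥0∞) * ρ ^ k < X a <;> simp [Set.indicator, h]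
    _ ≤ ∫⁻ a, {a | (B : ℝ≥0∞) < X a}.indicator (fun a => X a * N (X a)) a ∂ν := by
        refine lintegral_mono_ae ?_
        filter_upwards [hXfin] with a ha
        rw [Set.indicator_mul_right]
        gcongr
        exact tsum_indicator_mul_pow_lt_le hρ (by exact_mod_cast hB) ha
    _ = ∫⁻ a in {a | (B : ℝ≥0∞) < X a}, X a * N (X a) ∂ν :=
        lintegral_indicator (measurableSet_lt measurable_const hX) _

lemma le_rpow_mul_rpow_one_sub {b l : ℝ≥0∞} (hb0 : b ≠ 0) (hbtop : b ≠ ⊤) (hbl : b ≤ l) {p : ℝ}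
    (hp : 1 ≤ p) : l ≤ l ^ p * b ^ (1 - p) := by
  rcases eq_or_ne l ⊤ with rfl | hltop
  · rw [ENNReal.top_rpow_of_pos (by linarith), ENNReal.top_mul (ENNReal.rpow_pos
      (pos_iff_ne_zero.2 hb0) hbtop).ne']
  have hl0 : l ≠ 0 := ne_bot_of_le_ne_bot hb0 hbl
  have hexp : (1 : ℝ) - p = -(p - 1) := by ring
  calc l = l ^ p * l ^ (1 - p) := by
        rw [← ENNReal.rpow_add _ _ hl0 hltop, add_sub_cancel, ENNReal.rpow_one]
    _ ≤ l ^ p * b ^ (1 - p) := by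
        rw [hexp, ENNReal.rpow_neg, ENNReal.rpow_neg]
        gcongr

lemma tendsto_tsum_rpow_mul_pow_atTop {θ m : ℝ≥0∞} (hθ0 : θ ≠ 0) {q : ℝ}
    (hq : q < 0) (hγ : θ ^ q * m < 1) :
    Tendsto (fun B : ℕ => ∑' k : ℕ, ((B : ℝ≥0∞) * θ ^ k) ^ q * m ^ k) atTop (𝓝 0) := by
  have hB : Tendsto (fun B : ℕ => (B : ℝ≥0∞) ^ q) atTop (𝓝 0) := by
    have h := ((ENNReal.continuous_rpow_const (y := q)).tendsto ⊤).comp ENNReal.tendsto_nat_nhds_top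
    rwa [ENNReal.top_rpow_of_neg hq] at h
  have hlim := ENNReal.Tendsto.mul_const hB (Or.inr (ENNReal.inv_ne_top.2 (tsub_pos_of_lt hγ).ne'))
  rw [zero_mul] at hlim
  refine hlim.congr' ?_
  filter_upwards [eventually_ne_atTop 0] with B hB0
  rw [← ENNReal.tsum_geometric, ← ENNReal.tsum_mul_left]
  refine tsum_congr fun k => ?_
  rw [ENNReal.mul_rpow_of_ne_zero (by exact_mod_cast hB0) (pow_ne_zero _ hθ0), mul_pow,
    ← ENNReal.rpow_natCast_mul, mul_comm (k : ℝ), ENNReal.rpow_mul_natCast]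
  ring

lemma exists_scales (p : ℝ) {m : ℝ≥0∞} (hm : m < 1) :
    ∃ θ : ℝ≥0∞, ∃ ρ : ℝ≥0, θ ≠ 0 ∧ θ ≠ ⊤ ∧ 1 < ρ ∧ θ * ρ < 1 ∧ θ ^ (1 - p) * m < 1 := by
  have hθ : Tendsto (fun t : ℝ≥0∞ => t ^ (1 - p) * m) (𝓝[<] 1) (𝓝 (1 * m)) := by
    refine ENNReal.Tendsto.mul_const ?_ (Or.inr hm.ne_top)
    simpa using
      ((ENNReal.continuous_rpow_const (y := 1 - p)).tendsto 1).mono_left nhdsWithin_le_nhds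
  rw [one_mul] at hθ
  obtain ⟨θ, hθm, hθ0, hθ1⟩ := ((hθ.eventually (gt_mem_nhds hm)).and
    (Ioo_mem_nhdsLT zero_lt_one)).exists
  have hρ : Tendsto (fun t : ℝ≥0 => θ * t) (𝓝[>] 1) (𝓝 (θ * 1)) :=
    ENNReal.Tendsto.const_mul (ENNReal.tendsto_coe.2 nhdsWithin_le_nhds) (Or.inl one_ne_zero)
  rw [mul_one] at hρ
  obtain ⟨ρ, hθρ, hρ1⟩ := ((hρ.eventually (gt_mem_nhds hθ1)).and self_mem_nhdsWithin).exists
  exact ⟨θ, ρ, hθ0.ne', (hθ1.trans ENNReal.one_lt_top).ne, hρ1, hθρ, hθm⟩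

def offspringSum (u : ℕ → ℝ≥0) : ℝ≥0∞ := ∑' i, (u i : ℝ≥0∞)

@[fun_prop]
lemma measurable_offspringSum : Measurable offspringSum :=
  Measurable.tsum fun i => (measurable_pi_apply i).coe_nnreal_ennreal

def lowPart (a x : ℝ≥0∞) : ℝ≥0∞ := if x ≤ a then x else 0

def highPart (a x : ℝ≥0∞) : ℝ≥0∞ := if x ≤ a then 0 else x

lemma lowPart_add_highPart (a x : ℝ≥0∞) : lowPart a x + highPart a x = x := by
  unfold lowPart highPart; split_ifs <;> simp

lemma lowPart_le (a x : ℝ≥0∞) : lowPart a x ≤ a := by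
  unfold lowPart; split_ifs with h
  · exact h
  · exact zero_le

lemma lowPart_le_self (a x : ℝ≥0∞) : lowPart a x ≤ x := by
  unfold lowPart; split_ifs <;> simp

lemma highPart_le_self (a x : ℝ≥0∞) : highPart a x ≤ x := by
  unfold highPart; split_ifs <;> simp

@[simp] lemma highPart_top (x : ℝ≥0∞) : highPart ⊤ x = 0 := by simp [highPart]

@[fun_prop]
lemma measurable_lowPart (a : ℝ≥0∞) : Measurable (lowPart a) :=
  Measurable.ite (measurableSet_le measurable_id measurable_const) measurable_id measurable_const

@[fun_prop]
lemma measurable_highPart (a : ℝ≥0∞) : Measurable (highPart a) :=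
  Measurable.ite (measurableSet_le measurable_id measurable_const) measurable_const measurable_id

lemma measurable_lowPart_mul_offspringSum (a : ℝ≥0∞) :
    Measurable (Function.uncurry fun l u => lowPart a (l * offspringSum u)) :=
  (measurable_lowPart a).comp (measurable_fst.mul (measurable_offspringSum.comp measurable_snd))

lemma measurable_highPart_mul_offspringSum (a : ℝ≥0∞) :
    Measurable (Function.uncurry fun l u => highPart a (l * offspringSum u)) :=
  (measurable_highPart a).comp (measurable_fst.mul (measurable_offspringSum.comp measurable_snd))

variable {Ω : Type*} {mΩ : MeasurableSpace Ω}

/-- Words are stored reversed, so that appending a last letter is `List.cons`. The offspring of a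
word `f` of length `k` are all deleted once their total weight exceeds `c k`; for `c = ⊤` nothing is
deleted and this is the cascade weight of `f.reverse`. -/
def truncWeight (U : List ℕ → Ω → ℕ → ℝ≥0) (c : ℕ → ℝ≥0∞) : List ℕ → Ω → ℝ≥0∞
  | [] => fun _ => 1
  | i :: f => fun ω =>
      if truncWeight U c f ω * offspringSum (U f.reverse ω) ≤ c f.length
      then truncWeight U c f ω * U f.reverse ω i else 0

abbrev Gen (n : ℕ) := {l : List ℕ // l.length = n}

def truncMass (U : List ℕ → Ω → ℕ → ℝ≥0) (c : ℕ → ℝ≥0∞) (n : ℕ) (ω : Ω) : ℝ≥0∞ :=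
  ∑' f : Gen n, truncWeight U c f ω

abbrev cascadeSigma (U : List ℕ → Ω → ℕ → ℝ≥0) (n : ℕ) : MeasurableSpace Ω :=
  sigmaCoords U {e | e.length < n}

section Combinatorics

variable (U : List ℕ → Ω → ℕ → ℝ≥0) (c : ℕ → ℝ≥0∞)

lemma cascadeWeight_concat (e : List ℕ) (i : ℕ) (ω : Ω) :
    cascadeWeight U (e ++ [i]) ω = cascadeWeight U e ω * U e ω i := by
  rw [cascadeWeight, cascadeWeight, List.length_append, List.length_singleton,
    Finset.prod_range_succ]
  congr 1
  · refine Finset.prod_congr rfl fun k hk => ?_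
    rw [Finset.mem_range] at hk
    rw [List.take_append_of_le_length hk.le, List.getD_append _ _ _ _ hk]
  · rw [List.take_left, List.getD_append_right _ _ _ _ le_rfl]
    simp

@[simp] lemma truncWeight_top_cons (i : ℕ) (f : List ℕ) (ω : Ω) :
    truncWeight U ⊤ (i :: f) ω = truncWeight U ⊤ f ω * U f.reverse ω i := by
  simp [truncWeight]

lemma truncWeight_top (f : List ℕ) (ω : Ω) :
    truncWeight U ⊤ f ω = cascadeWeight U f.reverse ω := by
  induction f with
  | nil => simp [truncWeight, cascadeWeight]
  | cons i f ih => simp [ih, cascadeWeight_concat]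

lemma truncWeight_le_top (f : List ℕ) (ω : Ω) : truncWeight U c f ω ≤ truncWeight U ⊤ f ω := by
  induction f with
  | nil => exact le_rfl
  | cons i f ih =>
    rw [truncWeight_top_cons]
    simp only [truncWeight]
    split_ifs
    · exact mul_le_mul_left ih _
    · exact zero_le

lemma truncMass_le_top (n : ℕ) (ω : Ω) : truncMass U c n ω ≤ truncMass U ⊤ n ω :=
  ENNReal.tsum_le_tsum fun f => truncWeight_le_top U c f ω

lemma cascadeMass_eq_truncMass_top (n : ℕ) (ω : Ω) :
    cascadeMass U n ω = truncMass U ⊤ n ω := by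
  let rev : Gen n ≃ Gen n := (List.reverse_involutive.toPerm _).subtypeEquiv fun l => by simp
  rw [cascadeMass, truncMass, ← rev.tsum_eq]
  simp [rev, truncWeight_top]

omit U c in
lemma tsum_gen_zero (H : List ℕ → ℝ≥0∞) : ∑' f : Gen 0, H f = H [] :=
  tsum_eq_single (⟨[], rfl⟩ : Gen 0) fun f hf =>
    (hf (Subtype.ext (List.length_eq_zero_iff.1 f.2))).elim

lemma truncMass_zero (ω : Ω) : truncMass U c 0 ω = 1 :=
  tsum_gen_zero fun f => truncWeight U c f ω

lemma tsum_gen_succ {n : ℕ} (H : List ℕ → ℝ≥0∞) :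
    ∑' f : Gen (n + 1), H f = ∑' f : Gen n, ∑' i : ℕ, H (i :: f) := by
  let e : ℕ × Gen n ≃ Gen (n + 1) :=
    { toFun := fun p => ⟨p.1 :: p.2.1, by simp [p.2.2]⟩
      invFun := fun g => (g.1.headI, ⟨g.1.tail, by simp [g.2]⟩)
      left_inv := fun p => by simp
      right_inv := fun ⟨i :: t, hl⟩ => rfl }
  rw [← e.tsum_eq, ENNReal.tsum_prod', ENNReal.tsum_comm]
  rfl

lemma truncMass_succ (n : ℕ) (ω : Ω) :
    truncMass U c (n + 1) ω
      = ∑' f : Gen n, lowPart (c n) (truncWeight U c f ω * offspringSum (U f.1.reverse ω)) := by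
  rw [truncMass, tsum_gen_succ (fun f => truncWeight U c f ω)]
  refine tsum_congr fun f => ?_
  simp only [truncWeight, lowPart, f.2]
  split_ifs
  · rw [ENNReal.tsum_mul_left]; rfl
  · simp

lemma tsum_gen_succ_rpow {p : ℝ} (hp : 0 ≤ p) (n : ℕ) (ω : Ω) :
    ∑' f : Gen (n + 1), truncWeight U ⊤ f ω ^ p
      = ∑' f : Gen n, truncWeight U ⊤ f ω ^ p * ∑' i, (U f.1.reverse ω i : ℝ≥0∞) ^ p := by
  rw [tsum_gen_succ (fun f => truncWeight U ⊤ f ω ^ p)]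
  refine tsum_congr fun f => ?_
  simp only [truncWeight_top_cons, ENNReal.mul_rpow_of_nonneg _ _ hp]
  exact ENNReal.tsum_mul_left

lemma measurable_truncWeight (f : List ℕ) :
    Measurable[cascadeSigma U f.length] (truncWeight U c f) := by
  induction f with
  | nil => exact measurable_const
  | cons i f ih =>
    have hT : Measurable[cascadeSigma U (f.length + 1)] (truncWeight U c f) :=
      ih.mono (sigmaCoords_mono U fun e (he : e.length < f.length) => he.trans (Nat.lt_succ_self _))
        le_rfl
    have hU : Measurable[cascadeSigma U (f.length + 1)] (U f.reverse) :=
      measurable_sigmaCoords (by simp)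
    exact Measurable.ite
      (measurableSet_le (hT.mul (measurable_offspringSum.comp hU)) measurable_const)
      (hT.mul ((measurable_pi_apply i).comp hU).coe_nnreal_ennreal) measurable_const

lemma measurable_truncWeight_gen {n : ℕ} (f : Gen n) :
    Measurable[cascadeSigma U n] (truncWeight U c f) :=
  by obtain ⟨f, rfl⟩ := f; exact measurable_truncWeight U c f

end Combinatorics

section OneStep

variable {ν : Measure (ℕ → ℝ≥0)} (hmean : ∫⁻ u, offspringSum u ∂ν = 1)
include hmean

lemma lintegral_lowPart_le (a l : ℝ≥0∞) : ∫⁻ u, lowPart a (l * offspringSum u) ∂ν ≤ l :=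
  (lintegral_mono fun u => lowPart_le_self _ _).trans_eq
    (by rw [lintegral_const_mul _ measurable_offspringSum, hmean, mul_one])

lemma lintegral_highPart_le {b r : ℝ≥0∞} (hb0 : b ≠ 0) (hbtop : b ≠ ⊤) {p : ℝ} (hp : 1 ≤ p)
    (l : ℝ≥0∞) :
    ∫⁻ u, highPart (b * r) (l * offspringSum u) ∂ν
      ≤ l * ∫⁻ u in {u | r < offspringSum u}, offspringSum u ∂ν + l ^ p * b ^ (1 - p) := by
  by_cases hl : l ≤ b
  · refine le_add_right ?_
    rw [← lintegral_indicator (measurableSet_lt measurable_const measurable_offspringSum),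
      ← lintegral_const_mul _ (measurable_offspringSum.indicator
        (measurableSet_lt measurable_const measurable_offspringSum))]
    refine lintegral_mono fun u => ?_
    unfold highPart
    split_ifs with h
    · exact zero_le
    · have hr : r < offspringSum u := lt_of_not_ge fun hu => h (mul_le_mul' hl hu)
      rw [Set.indicator_of_mem (show u ∈ {u | r < offspringSum u} from hr)]
  · refine le_add_left ?_
    calc ∫⁻ u, highPart (b * r) (l * offspringSum u) ∂ν ≤ ∫⁻ u, l * offspringSum u ∂ν :=
          lintegral_mono fun u => highPart_le_self _ _
      _ = l := by rw [lintegral_const_mul _ measurable_offspringSum, hmean, mul_one]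
      _ ≤ l ^ p * b ^ (1 - p) := le_rpow_mul_rpow_one_sub hb0 hbtop (le_of_not_ge hl) hp

end OneStep

section Expectations

variable {μ : Measure Ω} [IsProbabilityMeasure μ] {ν : Measure (ℕ → ℝ≥0)}
  {U : List ℕ → Ω → ℕ → ℝ≥0} (hUmeas : ∀ e, Measurable (U e))
  (hUlaw : ∀ e, Measure.map (U e) μ = ν) (hUindep : iIndepFun U μ)

def truncLoss (μ : Measure Ω) (U : List ℕ → Ω → ℕ → ℝ≥0) (c : ℕ → ℝ≥0∞) (k : ℕ) : ℝ≥0∞ :=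
  ∫⁻ ω, ∑' f : Gen k, highPart (c k) (truncWeight U c f ω * offspringSum (U f.1.reverse ω)) ∂μ

include hUmeas in
lemma measurable_truncWeight_of_measurable (c : ℕ → ℝ≥0∞) (f : List ℕ) :
    Measurable (truncWeight U c f) :=
  (measurable_truncWeight U c f).mono (sigmaCoords_le hUmeas _) le_rfl

include hUmeas in
lemma measurable_truncMass (c : ℕ → ℝ≥0∞) (n : ℕ) : Measurable (truncMass U c n) :=
  Measurable.tsum fun f => measurable_truncWeight_of_measurable hUmeas c f.1

lemma reverse_notMem_length_lt {n : ℕ} (f : Gen n) : f.1.reverse ∉ {e : List ℕ | e.length < n} := by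
  simp [f.2]

include hUmeas hUlaw hUindep

lemma lintegral_tsum_gen_comp {β : Type*} [MeasurableSpace β] {n : ℕ} {G : Gen n → Ω → β}
    (hG : ∀ f, Measurable[cascadeSigma U n] (G f)) {Φ : β → (ℕ → ℝ≥0) → ℝ≥0∞}
    (hΦ : Measurable (Function.uncurry Φ)) :
    ∫⁻ ω, ∑' f : Gen n, Φ (G f ω) (U f.1.reverse ω) ∂μ
      = ∫⁻ ω, ∑' f : Gen n, ∫⁻ u, Φ (G f ω) u ∂ν ∂μ := by
  have : IsFiniteMeasure ν := hUlaw [] ▸ inferInstance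
  have hGm (f : Gen n) : Measurable (G f) := (hG f).mono (sigmaCoords_le hUmeas _) le_rfl
  calc ∫⁻ ω, ∑' f : Gen n, Φ (G f ω) (U f.1.reverse ω) ∂μ
      = ∑' f : Gen n, ∫⁻ ω, Φ (G f ω) (U f.1.reverse ω) ∂μ :=
        lintegral_tsum fun f => (hΦ.comp ((hGm f).prodMk (hUmeas _))).aemeasurable
    _ = ∑' f : Gen n, ∫⁻ ω, ∫⁻ u, Φ (G f ω) u ∂ν ∂μ := tsum_congr fun f => by
        rw [lintegral_comp_eq_of_notMem hUmeas hUindep (reverse_notMem_length_lt f) (hG f) hΦ,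
          hUlaw]
    _ = ∫⁻ ω, ∑' f : Gen n, ∫⁻ u, Φ (G f ω) u ∂ν ∂μ :=
        (lintegral_tsum fun f => (hΦ.lintegral_prod_right.comp (hGm f)).aemeasurable).symm

variable (hmean : ∫⁻ u, offspringSum u ∂ν = 1)
include hmean

lemma lintegral_truncMass_eq_succ_add_truncLoss (c : ℕ → ℝ≥0∞) (k : ℕ) :
    ∫⁻ ω, truncMass U c k ω ∂μ = ∫⁻ ω, truncMass U c (k + 1) ω ∂μ + truncLoss μ U c k := by
  have hmass : ∫⁻ ω, truncMass U c k ω ∂μ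
      = ∫⁻ ω, ∑' f : Gen k, truncWeight U c f ω * offspringSum (U f.1.reverse ω) ∂μ := by
    rw [lintegral_tsum_gen_comp hUmeas hUlaw hUindep (measurable_truncWeight_gen U c)
      (Φ := fun l u => l * offspringSum u) (by fun_prop)]
    simp_rw [lintegral_const_mul _ measurable_offspringSum, hmean, mul_one, truncMass]
  rw [hmass, truncLoss, ← lintegral_add_left (measurable_truncMass hUmeas c (k + 1))]
  refine lintegral_congr fun ω => ?_
  simp_rw [truncMass_succ, ← ENNReal.tsum_add, lowPart_add_highPart]

lemma lintegral_truncMass_add_sum_truncLoss (c : ℕ → ℝ≥0∞) (n : ℕ) :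
    ∫⁻ ω, truncMass U c n ω ∂μ + ∑ k ∈ Finset.range n, truncLoss μ U c k = 1 := by
  induction n with
  | zero => simp [truncMass_zero]
  | succ n ih =>
    rw [← ih, lintegral_truncMass_eq_succ_add_truncLoss hUmeas hUlaw hUindep hmean c n,
      Finset.sum_range_succ]
    ring

lemma lintegral_truncMass_le_one (c : ℕ → ℝ≥0∞) (n : ℕ) : ∫⁻ ω, truncMass U c n ω ∂μ ≤ 1 :=
  (lintegral_truncMass_add_sum_truncLoss hUmeas hUlaw hUindep hmean c n).le.trans' le_self_add

lemma lintegral_truncMass_top (n : ℕ) : ∫⁻ ω, truncMass U ⊤ n ω ∂μ = 1 := by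
  simpa [truncLoss] using lintegral_truncMass_add_sum_truncLoss hUmeas hUlaw hUindep hmean ⊤ n

omit hmean in
lemma lintegral_tsum_truncWeight_top_rpow {p : ℝ} (hp : 0 ≤ p) (n : ℕ) :
    ∫⁻ ω, ∑' f : Gen n, truncWeight U ⊤ f ω ^ p ∂μ = (∫⁻ u, ∑' i, (u i : ℝ≥0∞) ^ p ∂ν) ^ n := by
  have hmeas : Measurable fun u : ℕ → ℝ≥0 => ∑' i, (u i : ℝ≥0∞) ^ p :=
    Measurable.tsum fun i => (measurable_pi_apply i).coe_nnreal_ennreal.pow_const _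
  induction n with
  | zero =>
    rw [lintegral_congr fun ω => tsum_gen_zero fun f => truncWeight U ⊤ f ω ^ p]
    simp [truncWeight]
  | succ n ih =>
    simp_rw [tsum_gen_succ_rpow U hp]
    rw [lintegral_tsum_gen_comp hUmeas hUlaw hUindep (measurable_truncWeight_gen U ⊤)
      (Φ := fun l u => l ^ p * ∑' i, (u i : ℝ≥0∞) ^ p)
      ((measurable_fst.pow_const _).mul (hmeas.comp measurable_snd))]
    simp_rw [lintegral_const_mul _ hmeas, ENNReal.tsum_mul_right]
    have hW : Measurable fun ω => ∑' f : Gen n, truncWeight U ⊤ f ω ^ p :=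
      Measurable.tsum fun f => (measurable_truncWeight_of_measurable hUmeas ⊤ f.1).pow_const _
    rw [lintegral_mul_const _ hW, ih, pow_succ]

lemma truncLoss_le {c : ℕ → ℝ≥0∞} {k : ℕ} {b r : ℝ≥0∞} (hb0 : b ≠ 0) (hbtop : b ≠ ⊤)
    (hbr : c k = b * r) {p : ℝ} (hp : 1 ≤ p) :
    truncLoss μ U c k ≤ ∫⁻ u in {u | r < offspringSum u}, offspringSum u ∂ν
      + b ^ (1 - p) * (∫⁻ u, ∑' i, (u i : ℝ≥0∞) ^ p ∂ν) ^ k := by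
  set tail := ∫⁻ u in {u | r < offspringSum u}, offspringSum u ∂ν
  have hT (f : Gen k) := measurable_truncWeight_of_measurable hUmeas c f.1
  have hpow : Measurable fun ω => ∑' f : Gen k, truncWeight U c f ω ^ p :=
    Measurable.tsum fun f => (hT f).pow_const _
  calc truncLoss μ U c k
      = ∫⁻ ω, ∑' f : Gen k, ∫⁻ u, highPart (c k) (truncWeight U c f ω * offspringSum u) ∂ν ∂μ :=
        lintegral_tsum_gen_comp hUmeas hUlaw hUindep (measurable_truncWeight_gen U c)
          (measurable_highPart_mul_offspringSum _)
    _ ≤ ∫⁻ ω, truncMass U c k ω * tail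
          + (∑' f : Gen k, truncWeight U c f ω ^ p) * b ^ (1 - p) ∂μ := by
        refine lintegral_mono fun ω => ?_
        rw [truncMass, ← ENNReal.tsum_mul_right, ← ENNReal.tsum_mul_right, ← ENNReal.tsum_add]
        exact ENNReal.tsum_le_tsum fun f => hbr ▸ lintegral_highPart_le hmean hb0 hbtop hp _
    _ = (∫⁻ ω, truncMass U c k ω ∂μ) * tail
          + (∫⁻ ω, ∑' f : Gen k, truncWeight U c f ω ^ p ∂μ) * b ^ (1 - p) := by
        rw [lintegral_add_left ((measurable_truncMass hUmeas c k).mul_const _),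
          lintegral_mul_const _ (measurable_truncMass hUmeas c k), lintegral_mul_const _ hpow]
    _ ≤ 1 * tail + (∫⁻ ω, ∑' f : Gen k, truncWeight U ⊤ f ω ^ p ∂μ) * b ^ (1 - p) := by
        gcongr
        · exact lintegral_truncMass_le_one hUmeas hUlaw hUindep hmean c k
        · exact truncWeight_le_top U c _ _
    _ = tail + b ^ (1 - p) * (∫⁻ u, ∑' i, (u i : ℝ≥0∞) ^ p ∂ν) ^ k := by
        rw [lintegral_tsum_truncWeight_top_rpow hUmeas hUlaw hUindep (by linarith), one_mul,
          mul_comm]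

lemma lintegral_lowPart_truncWeight_le (c : ℕ → ℝ≥0∞) {k : ℕ} (f : Gen k) :
    ∫⁻ ω, lowPart (c k) (truncWeight U c f ω * offspringSum (U f.1.reverse ω)) ∂μ
      ≤ ∫⁻ ω, truncWeight U c f ω ∂μ := by
  rw [lintegral_comp_eq_of_notMem hUmeas hUindep (reverse_notMem_length_lt f)
    (measurable_truncWeight_gen U c f) (measurable_lowPart_mul_offspringSum _), hUlaw]
  exact lintegral_mono fun ω => lintegral_lowPart_le hmean _ _

lemma lintegral_lowPart_mul_lowPart_le (c : ℕ → ℝ≥0∞) {k : ℕ} {f f' : Gen k} (hff' : f ≠ f') :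
    ∫⁻ ω, lowPart (c k) (truncWeight U c f ω * offspringSum (U f.1.reverse ω))
        * lowPart (c k) (truncWeight U c f' ω * offspringSum (U f'.1.reverse ω)) ∂μ
      ≤ ∫⁻ ω, truncWeight U c f ω * truncWeight U c f' ω ∂μ := by
  set s := {e : List ℕ | e.length < k}
  have hfs : f.1.reverse ∉ insert f'.1.reverse s := by
    rintro (h | h)
    · exact hff' (Subtype.ext (List.reverse_injective h))
    · exact reverse_notMem_length_lt f h
  have hF : Measurable[sigmaCoords U s] fun ω => (truncWeight U c f ω, truncWeight U c f' ω) :=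
    (measurable_truncWeight_gen U c f).prodMk (measurable_truncWeight_gen U c f')
  have hF' : Measurable[sigmaCoords U (insert f'.1.reverse s)]
      fun ω => ((truncWeight U c f ω, truncWeight U c f' ω), U f'.1.reverse ω) :=
    (hF.mono (sigmaCoords_mono U (Set.subset_insert _ _)) le_rfl).prodMk
      (measurable_sigmaCoords (Set.mem_insert _ _))
  have hlow (l : ℝ≥0∞) : Measurable fun u => lowPart (c k) (l * offspringSum u) := by fun_prop
  calc _ = ∫⁻ ω, ∫⁻ u, lowPart (c k) (truncWeight U c f ω * offspringSum u)
        * lowPart (c k) (truncWeight U c f' ω * offspringSum (U f'.1.reverse ω)) ∂ν ∂μ := by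
        rw [← hUlaw f.1.reverse]
        exact lintegral_comp_eq_of_notMem hUmeas hUindep hfs hF'
          (Φ := fun x u =>
            lowPart (c k) (x.1.1 * offspringSum u) * lowPart (c k) (x.1.2 * offspringSum x.2))
          (by fun_prop)
    _ ≤ ∫⁻ ω, truncWeight U c f ω
          * lowPart (c k) (truncWeight U c f' ω * offspringSum (U f'.1.reverse ω)) ∂μ := by
        refine lintegral_mono fun ω => ?_
        rw [lintegral_mul_const _ (hlow _)]
        exact mul_le_mul_left (lintegral_lowPart_le hmean _ _) _
    _ = ∫⁻ ω, ∫⁻ u, truncWeight U c f ω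
          * lowPart (c k) (truncWeight U c f' ω * offspringSum u) ∂ν ∂μ := by
        rw [← hUlaw f'.1.reverse]
        exact lintegral_comp_eq_of_notMem hUmeas hUindep (reverse_notMem_length_lt f') hF
          (Φ := fun x u => x.1 * lowPart (c k) (x.2 * offspringSum u)) (by fun_prop)
    _ ≤ ∫⁻ ω, truncWeight U c f ω * truncWeight U c f' ω ∂μ := by
        refine lintegral_mono fun ω => ?_
        rw [lintegral_const_mul _ (hlow _)]
        exact mul_le_mul_right (lintegral_lowPart_le hmean _ _) _

lemma lintegral_lowPart_mul_self_le (c : ℕ → ℝ≥0∞) {k : ℕ} (f : Gen k) :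
    ∫⁻ ω, lowPart (c k) (truncWeight U c f ω * offspringSum (U f.1.reverse ω))
        * lowPart (c k) (truncWeight U c f ω * offspringSum (U f.1.reverse ω)) ∂μ
      ≤ c k * ∫⁻ ω, truncWeight U c f ω ∂μ := by
  have hX : Measurable fun ω =>
      lowPart (c k) (truncWeight U c f ω * offspringSum (U f.1.reverse ω)) :=
    (measurable_lowPart_mul_offspringSum _).comp
      ((measurable_truncWeight_of_measurable hUmeas c f.1).prodMk (hUmeas _))
  calc _ ≤ ∫⁻ ω, c k * lowPart (c k) (truncWeight U c f ω * offspringSum (U f.1.reverse ω)) ∂μ :=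
        lintegral_mono fun ω => mul_le_mul_left (lowPart_le _ _) _
    _ ≤ c k * ∫⁻ ω, truncWeight U c f ω ∂μ := by
        rw [lintegral_const_mul _ hX]
        exact mul_le_mul_right (lintegral_lowPart_truncWeight_le hUmeas hUlaw hUindep hmean c f) _

lemma lintegral_truncMass_succ_sq_le (c : ℕ → ℝ≥0∞) (k : ℕ) :
    ∫⁻ ω, truncMass U c (k + 1) ω ^ 2 ∂μ ≤ ∫⁻ ω, truncMass U c k ω ^ 2 ∂μ + c k := by
  classical
  set T : Gen k → Ω → ℝ≥0∞ := fun f => truncWeight U c f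
  set X : Gen k → Ω → ℝ≥0∞ := fun f ω => lowPart (c k) (T f ω * offspringSum (U f.1.reverse ω))
  have hT (f : Gen k) : Measurable (T f) := measurable_truncWeight_of_measurable hUmeas c f.1
  have hX (f : Gen k) : Measurable (X f) :=
    (measurable_lowPart_mul_offspringSum _).comp ((hT f).prodMk (hUmeas _))
  have hpair (q : Gen k × Gen k) : ∫⁻ ω, X q.1 ω * X q.2 ω ∂μ
      ≤ ∫⁻ ω, T q.1 ω * T q.2 ω ∂μ + if q.1 = q.2 then c k * ∫⁻ ω, T q.1 ω ∂μ else 0 := by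
    obtain ⟨f, f'⟩ := q
    by_cases hff' : f = f'
    · subst hff'
      simpa using le_add_left (lintegral_lowPart_mul_self_le hUmeas hUlaw hUindep hmean c f)
    · simpa [hff'] using lintegral_lowPart_mul_lowPart_le hUmeas hUlaw hUindep hmean c hff'
  have hdiag : ∑' q : Gen k × Gen k, (if q.1 = q.2 then c k * ∫⁻ ω, T q.1 ω ∂μ else 0)
      = c k * ∫⁻ ω, truncMass U c k ω ∂μ := by
    rw [ENNReal.tsum_prod', tsum_congr fun f => tsum_ite_eq' f fun _ => c k * ∫⁻ ω, T f ω ∂μ,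
      ENNReal.tsum_mul_left, ← lintegral_tsum fun f => (hT f).aemeasurable]
    rfl
  calc ∫⁻ ω, truncMass U c (k + 1) ω ^ 2 ∂μ
      = ∑' q : Gen k × Gen k, ∫⁻ ω, X q.1 ω * X q.2 ω ∂μ := by
        simp_rw [truncMass_succ]
        exact lintegral_tsum_sq hX
    _ ≤ ∑' q : Gen k × Gen k, (∫⁻ ω, T q.1 ω * T q.2 ω ∂μ
          + if q.1 = q.2 then c k * ∫⁻ ω, T q.1 ω ∂μ else 0) := ENNReal.tsum_le_tsum hpair
    _ = ∫⁻ ω, truncMass U c k ω ^ 2 ∂μ + c k * ∫⁻ ω, truncMass U c k ω ∂μ := by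
        rw [ENNReal.tsum_add, hdiag, ← lintegral_tsum_sq hT]
        rfl
    _ ≤ ∫⁻ ω, truncMass U c k ω ^ 2 ∂μ + c k := by
        gcongr
        exact mul_le_of_le_one_right zero_le
          (lintegral_truncMass_le_one hUmeas hUlaw hUindep hmean c k)

lemma lintegral_truncMass_sq_le (c : ℕ → ℝ≥0∞) (n : ℕ) :
    ∫⁻ ω, truncMass U c n ω ^ 2 ∂μ ≤ 1 + ∑ k ∈ Finset.range n, c k := by
  induction n with
  | zero => simp [truncMass_zero]
  | succ n ih =>
    rw [Finset.sum_range_succ, ← add_assoc]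
    exact (lintegral_truncMass_succ_sq_le hUmeas hUlaw hUindep hmean c n).trans (by gcongr)

lemma lintegral_truncMass_top_sub_le (c : ℕ → ℝ≥0∞) (n : ℕ) :
    ∫⁻ ω, truncMass U ⊤ n ω - truncMass U c n ω ∂μ ≤ ∑' k, truncLoss μ U c k := by
  have hT := lintegral_truncMass_add_sum_truncLoss hUmeas hUlaw hUindep hmean c n
  have hfin : ∫⁻ ω, truncMass U c n ω ∂μ ≠ ⊤ :=
    ne_top_of_le_ne_top ENNReal.one_ne_top
      (lintegral_truncMass_le_one hUmeas hUlaw hUindep hmean c n)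
  rw [lintegral_sub' (measurable_truncMass hUmeas c n).aemeasurable hfin
      (Eventually.of_forall (truncMass_le_top U c n)),
    lintegral_truncMass_top hUmeas hUlaw hUindep hmean, ← hT, ENNReal.add_sub_cancel_left hfin]
  exact ENNReal.sum_le_tsum _

lemma exists_tsum_truncLoss_le {p : ℝ} (hp : 1 < p)
    (hlog : ∫⁻ u, offspringSum u * ENNReal.ofReal (Real.log (offspringSum u).toReal) ∂ν ≠ ⊤)
    (hmp : ∫⁻ u, ∑' i, (u i : ℝ≥0∞) ^ p ∂ν < 1) {ε : ℝ≥0∞} (hε : 0 < ε) :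
    ∃ c : ℕ → ℝ≥0∞, ∑' k, c k ≠ ⊤ ∧ ∑' k, truncLoss μ U c k ≤ ε := by
  set m := ∫⁻ u, ∑' i, (u i : ℝ≥0∞) ^ p ∂ν
  obtain ⟨θ, ρ, hθ0, hθtop, hρ, hθρ, hγ⟩ := exists_scales p hmp
  set tail : ℝ≥0∞ → ℝ≥0∞ := fun r => ∫⁻ u in {u | r < offspringSum u}, offspringSum u ∂ν
  have hloss : ∀ᶠ B : ℕ in atTop, ∑' k, truncLoss μ U (fun k => B * θ ^ k * (B * ρ ^ k)) k
      ≤ ∑' k, tail (B * ρ ^ k) + ∑' k, ((B : ℝ≥0∞) * θ ^ k) ^ (1 - p) * m ^ k := by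
    filter_upwards [eventually_ne_atTop 0] with B hB
    rw [← ENNReal.tsum_add]
    refine ENNReal.tsum_le_tsum fun k => truncLoss_le hUmeas hUlaw hUindep hmean ?_ ?_ rfl hp.le
    · exact mul_ne_zero (by exact_mod_cast hB) (pow_ne_zero _ hθ0)
    · exact ENNReal.mul_ne_top (ENNReal.natCast_ne_top B) (ENNReal.pow_ne_top hθtop)
  have hlim : Tendsto (fun B : ℕ => ∑' k, tail (B * ρ ^ k)
      + ∑' k, ((B : ℝ≥0∞) * θ ^ k) ^ (1 - p) * m ^ k) atTop (𝓝 0) := by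
    have hint : ∫⁻ u, offspringSum u ∂ν ≠ ⊤ := hmean ▸ ENNReal.one_ne_top
    simpa using (tendsto_tsum_setLIntegral_mul_pow_lt measurable_offspringSum hint hlog hρ).add
      (tendsto_tsum_rpow_mul_pow_atTop hθ0 (by linarith) hγ)
  obtain ⟨B, hB, hBε⟩ := (hloss.and (hlim.eventually (gt_mem_nhds hε))).exists
  refine ⟨fun k => B * θ ^ k * (B * ρ ^ k), ?_, hB.trans hBε.le⟩
  have hc (k : ℕ) : (B : ℝ≥0∞) * θ ^ k * (B * ρ ^ k) = B * B * (θ * ρ) ^ k := by ring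
  simp_rw [hc, ENNReal.tsum_mul_left, ENNReal.tsum_geometric]
  exact ENNReal.mul_ne_top
    (ENNReal.mul_ne_top (ENNReal.natCast_ne_top B) (ENNReal.natCast_ne_top B))
    (ENNReal.inv_ne_top.2 (tsub_pos_of_lt hθρ).ne')

end Expectations

end MandelbrotCascade

end

open MandelbrotCascade

theorem mandelbrot_cascade_uniformly_integrable_general
    {Ω : Type*} {mΩ : MeasurableSpace Ω} (μ : Measure Ω) [IsProbabilityMeasure μ]
    (ν : Measure (ℕ → NNReal))
    (U : List ℕ → Ω → ℕ → NNReal)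
    (hUmeas : ∀ e, Measurable (U e))
    (hUlaw : ∀ e, Measure.map (U e) μ = ν)
    (hUindep : iIndepFun U μ)
    (hmean : ∫⁻ u, ∑' i : ℕ, (u i : ENNReal) ∂ν = 1)
    (hLlogL : ∃ p : ℝ, 1 < p ∧ p ≤ 2 ∧
      (∫⁻ u, (∑' i : ℕ, (u i : ENNReal))
          * ENNReal.ofReal (Real.log (∑' i : ℕ, (u i : ENNReal)).toReal) ∂ν < ⊤) ∧
      ∫⁻ u, ∑' i : ℕ, (u i : ENNReal) ^ p ∂ν < 1) :
    UniformIntegrable (fun n ω => (cascadeMass U n ω).toReal) 1 μ := by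
  obtain ⟨p, hp, -, hlog, hmp⟩ := hLlogL
  simp_rw [cascadeMass_eq_truncMass_top]
  refine uniformIntegrable_toReal_of_setLIntegral_le (measurable_truncMass hUmeas ⊤) fun ε hε => ?_
  obtain ⟨c, hc, hloss⟩ :=
    exists_tsum_truncLoss_le hUmeas hUlaw hUindep hmean hp hlog.ne hmp (ENNReal.half_pos hε.ne')
  obtain ⟨C, hC⟩ := exists_setLIntegral_le_lintegral_sub_add (μ := μ)
    (ENNReal.add_ne_top.2 ⟨ENNReal.one_ne_top, hc⟩) (ENNReal.half_pos hε.ne')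
  refine ⟨C, fun n => (hC (measurable_truncMass hUmeas ⊤ n) (measurable_truncMass hUmeas c n)
    (lintegral_truncMass_top hUmeas hUlaw hUindep hmean n).le
    ((lintegral_truncMass_sq_le hUmeas hUlaw hUindep hmean c n).trans
      (by gcongr; exact ENNReal.sum_le_tsum _))).trans ?_⟩
  calc _ ≤ ε / 2 + ε / 2 := by
        gcongr
        exact (lintegral_truncMass_top_sub_le hUmeas hUlaw hUindep hmean c n).trans hloss
    _ = ε := ENNReal.add_halves ε

/-- under an `L log L` moment and `E[∑ u_i^p] < 1` for some `p ∈ (1,2]`,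
the Mandelbrot-cascade martingale `(W_n)` is uniformly integrable
(second Proposition of Section 4.1). -/
theorem mandelbrot_cascade_uniformly_integrable
    {Ω : Type*} {mΩ : MeasurableSpace Ω} (μ : Measure Ω) [IsProbabilityMeasure μ]
    (ν : Measure (ℕ → NNReal)) [IsProbabilityMeasure ν]
    (U : List ℕ → Ω → ℕ → NNReal)
    (hUmeas : ∀ e, Measurable (U e))
    (hUlaw : ∀ e, Measure.map (U e) μ = ν)
    (hUindep : iIndepFun U μ)
    (hmean : ∫⁻ u, ∑' i : ℕ, (u i : ENNReal) ∂ν = 1)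
    (hLlogL : ∃ p : ℝ, 1 < p ∧ p ≤ 2 ∧
      (∫⁻ u, (∑' i : ℕ, (u i : ENNReal))
          * ENNReal.ofReal (Real.log (∑' i : ℕ, (u i : ENNReal)).toReal) ∂ν < ⊤) ∧
      ∫⁻ u, ∑' i : ℕ, (u i : ENNReal) ^ p ∂ν < 1) :
    UniformIntegrable (fun n ω => (cascadeMass U n ω).toReal) 1 μ :=
  mandelbrot_cascade_uniformly_integrable_general (mΩ := mΩ) μ ν U hUmeas hUlaw hUindep hmean hLlogL
end

section
/- For every real a ≥ 1, the function x ↦ x · log^{(a)}(x) is monotone increasing and convex on [0,∞). -/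
/-!
Below `e^a` the function is `c x²` with `c = (a/e)^a`, above it is `x (log x)^a`, and `c` is
exactly the constant for which the two pieces and their derivatives `2 c x` and
`(log x)^a + a (log x)^(a-1)` agree at `e^a` (with value `a^a e^a`, resp. slope `2 a^a`).
So `x ↦ x · log^{(a)}(x)` is differentiable on `ℝ` with a monotone derivative vanishing at `0`:
it is convex, and increasing on `[0, ∞)`.
-/

open Real Set

/-- `log^{(a)}(x) = (a/e)^a · x` for `x < e^a`, and `(log x)^a` for `x ≥ e^a`. -/
noncomputable def logA (a : ℝ) (x : ℝ) : ℝ :=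
  if x < Real.exp a then (a / Real.exp 1) ^ a * x else Real.log x ^ a

section

variable {a x : ℝ}

lemma logA_of_lt (hx : x < exp a) : logA a x = (a / exp 1) ^ a * x := if_pos hx

lemma logA_of_exp_le (hx : exp a ≤ x) : logA a x = log x ^ a := if_neg hx.not_gt

lemma div_exp_one_rpow_mul_exp (ha : 0 ≤ a) : (a / exp 1) ^ a * exp a = a ^ a := by
  rw [div_rpow ha (exp_pos 1).le, exp_one_rpow, div_mul_cancel₀ _ (exp_pos a).ne']

lemma mul_logA_of_le_exp (ha : 0 ≤ a) (hx : x ≤ exp a) :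
    x * logA a x = (a / exp 1) ^ a * x ^ 2 := by
  rcases hx.lt_or_eq with hx | rfl
  · rw [logA_of_lt hx]; ring
  · rw [logA_of_exp_le le_rfl, log_exp, ← div_exp_one_rpow_mul_exp ha]; ring

lemma mul_logA_of_exp_le (hx : exp a ≤ x) : x * logA a x = x * log x ^ a := by
  rw [logA_of_exp_le hx]

lemma hasDerivAt_mul_log_rpow (hx : 0 < x) (hx1 : x ≠ 1) :
    HasDerivAt (fun y => y * log y ^ a) (log x ^ a + a * log x ^ (a - 1)) x := by
  have hlog : HasDerivAt (fun y => log y ^ a) (a * log x ^ (a - 1) * x⁻¹) x :=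
    (hasDerivAt_rpow_const (Or.inl (log_ne_zero_of_pos_of_ne_one hx hx1))).comp x
      (hasDerivAt_log hx.ne')
  refine ((hasDerivAt_id' x).mul hlog).congr_deriv ?_
  field_simp

noncomputable def mulLogADeriv (a x : ℝ) : ℝ :=
  if x < exp a then 2 * (a / exp 1) ^ a * x else log x ^ a + a * log x ^ (a - 1)

lemma mulLogADeriv_of_exp_le (hx : exp a ≤ x) :
    mulLogADeriv a x = log x ^ a + a * log x ^ (a - 1) := if_neg hx.not_gt

lemma mulLogADeriv_of_le_exp (ha : 0 < a) (hx : x ≤ exp a) :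
    mulLogADeriv a x = 2 * (a / exp 1) ^ a * x := by
  rcases hx.lt_or_eq with hx | rfl
  · exact if_pos hx
  · rw [mulLogADeriv_of_exp_le le_rfl, log_exp, rpow_sub_one ha.ne', mul_assoc,
      div_exp_one_rpow_mul_exp ha.le]
    field_simp
    ring

lemma hasDerivWithinAt_mul_logA_Iic (ha : 0 < a) (hx : x ≤ exp a) :
    HasDerivWithinAt (fun y => y * logA a y) (mulLogADeriv a x) (Iic (exp a)) x := by
  have hsq : HasDerivAt (fun y => (a / exp 1) ^ a * y ^ 2) (2 * (a / exp 1) ^ a * x) x := by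
    refine ((hasDerivAt_pow 2 x).const_mul _).congr_deriv ?_
    norm_num
    ring
  rw [mulLogADeriv_of_le_exp ha hx]
  exact hsq.hasDerivWithinAt.congr (fun y hy => mul_logA_of_le_exp ha.le hy)
    (mul_logA_of_le_exp ha.le hx)

lemma hasDerivWithinAt_mul_logA_Ici (ha : 0 < a) (hx : exp a ≤ x) :
    HasDerivWithinAt (fun y => y * logA a y) (mulLogADeriv a x) (Ici (exp a)) x := by
  have hx1 : 1 < x := (one_lt_exp_iff.mpr ha).trans_le hx
  rw [mulLogADeriv_of_exp_le hx]
  exact (hasDerivAt_mul_log_rpow (by linarith) hx1.ne').hasDerivWithinAt.congr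
    (fun y hy => mul_logA_of_exp_le hy) (mul_logA_of_exp_le hx)

lemma hasDerivAt_mul_logA (ha : 0 < a) (x : ℝ) :
    HasDerivAt (fun y => y * logA a y) (mulLogADeriv a x) x := by
  rcases lt_trichotomy x (exp a) with hx | rfl | hx
  · exact (hasDerivWithinAt_mul_logA_Iic ha hx.le).hasDerivAt (Iic_mem_nhds hx)
  · have h := (hasDerivWithinAt_mul_logA_Iic ha le_rfl).union
      (hasDerivWithinAt_mul_logA_Ici ha le_rfl)
    rwa [Iic_union_Ici, hasDerivWithinAt_univ] at h
  · exact (hasDerivWithinAt_mul_logA_Ici ha hx.le).hasDerivAt (Ici_mem_nhds hx)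

lemma monotone_mulLogADeriv (ha : 1 ≤ a) : Monotone (mulLogADeriv a) := by
  have ha0 : 0 < a := one_pos.trans_le ha
  refine MonotoneOn.Iic_union_Ici (a := exp a) (fun x hx y hy hxy => ?_) (fun x hx y hy hxy => ?_)
  · rw [mulLogADeriv_of_le_exp ha0 hx, mulLogADeriv_of_le_exp ha0 hy]
    gcongr
  · have hlog : a ≤ log x := by simpa using log_le_log (exp_pos a) hx
    have hxy' : log x ≤ log y := log_le_log ((exp_pos a).trans_le hx) hxy
    rw [mulLogADeriv_of_exp_le hx, mulLogADeriv_of_exp_le (le_trans hx hxy)]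
    gcongr <;> linarith

end

/-- for every `a ≥ 1`, the function `x ↦ x · log^{(a)}(x)` is monotone
increasing and convex on `[0,∞)`. -/
theorem mul_logA_monotoneOn_convexOn (a : ℝ) (ha : 1 ≤ a) :
    MonotoneOn (fun x => x * logA a x) (Set.Ici (0 : ℝ)) ∧
    ConvexOn ℝ (Set.Ici (0 : ℝ)) (fun x => x * logA a x) := by
  have ha0 : 0 < a := one_pos.trans_le ha
  have hderiv := hasDerivAt_mul_logA ha0
  have hdiff : Differentiable ℝ (fun x => x * logA a x) := fun x => (hderiv x).differentiableAt
  have hderiv_eq : deriv (fun x => x * logA a x) = mulLogADeriv a :=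
    funext fun x => (hderiv x).deriv
  have hmono := monotone_mulLogADeriv ha
  constructor
  · refine monotoneOn_of_deriv_nonneg (convex_Ici 0) hdiff.continuous.continuousOn
      hdiff.differentiableOn fun x hx => ?_
    rw [interior_Ici] at hx
    have h0 : mulLogADeriv a 0 = 0 := by
      rw [mulLogADeriv_of_le_exp ha0 (exp_pos a).le, mul_zero]
    rw [hderiv_eq, ← h0]
    exact hmono (le_of_lt hx)
  · rw [← hderiv_eq] at hmono
    exact (hmono.convexOn_univ_of_deriv hdiff).subset (subset_univ _) (convex_Ici 0)
end

section
/- Let ρ > 1 and let Y be a nonnegative random variable. Then Σ_{n≥1} E[Y · 1_{Y > ρ^n}] ≤ (1/log ρ) · E[Y · log^{(1)}(Y)], where both sides take values in [0,∞]. -/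
open MeasureTheory

/-!
Since `ρ^(n+1) < y` forces `(n + 1) log ρ < log y`, at most `log y / log ρ` of the events
`{Y > ρ^(n+1)}` contain a given point, so pointwise `∑ₙ Y · 1_{Y > ρ^(n+1)} ≤ Y log Y / log ρ`,
and `log ≤ log^{(1)}` on `(0, ∞)`. Integrate, exchanging sum and integral by monotone convergence.
-/

open Real
open scoped ENNReal

theorem log_le_logA_one {y : ℝ} (hy : 0 < y) : log y ≤ logA 1 y := by
  unfold logA
  split_ifs
  · have := log_le_sub_one_of_pos (div_pos hy (exp_pos 1))
    rw [log_div hy.ne' (exp_ne_zero 1), log_exp] at this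
    rw [rpow_one, one_div, inv_mul_eq_div]
    linarith
  · simp

theorem natCast_floor_le_ofReal (a : ℝ) : (⌊a⌋₊ : ℝ≥0∞) ≤ ENNReal.ofReal a := by
  rcases le_or_gt 0 a with ha | ha
  · exact ENNReal.ofReal_natCast ⌊a⌋₊ ▸ ENNReal.ofReal_le_ofReal (Nat.floor_le ha)
  · simp [Nat.floor_of_nonpos ha.le]

theorem lt_floor_log_div_log_of_pow_succ_lt {ρ y : ℝ} (hρ : 1 < ρ) {n : ℕ}
    (h : ρ ^ (n + 1) < y) : n < ⌊log y / log ρ⌋₊ := by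
  have hlog : ((n + 1 : ℕ) : ℝ) * log ρ < log y := by
    rw [← log_pow]
    exact log_lt_log (by positivity) h
  rw [← Nat.succ_le_iff, Nat.le_floor_iff' n.succ_ne_zero]
  exact (le_div_iff₀ (log_pos hρ)).2 hlog.le

theorem tsum_ite_pow_succ_lt_le {ρ : ℝ} (hρ : 1 < ρ) (y : ℝ) (c : ℝ≥0∞) :
    ∑' n : ℕ, (if ρ ^ (n + 1) < y then c else 0) ≤ ENNReal.ofReal (log y / log ρ) * c := by
  have hsupp : ∀ n ∉ Finset.range ⌊log y / log ρ⌋₊, (if ρ ^ (n + 1) < y then c else 0) = 0 :=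
    fun n hn ↦ if_neg fun h ↦ hn (Finset.mem_range.2 (lt_floor_log_div_log_of_pow_succ_lt hρ h))
  calc ∑' n : ℕ, (if ρ ^ (n + 1) < y then c else 0)
      = ∑ n ∈ Finset.range ⌊log y / log ρ⌋₊, (if ρ ^ (n + 1) < y then c else 0) :=
        tsum_eq_sum hsupp
    _ ≤ ∑ _n ∈ Finset.range ⌊log y / log ρ⌋₊, c :=
        Finset.sum_le_sum fun n _ ↦ by split_ifs <;> simp
    _ ≤ ENNReal.ofReal (log y / log ρ) * c := by
        rw [Finset.sum_const, Finset.card_range, nsmul_eq_mul]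
        gcongr
        exact natCast_floor_le_ofReal _

theorem tsum_ite_pow_succ_lt_le_logA {ρ : ℝ} (hρ : 1 < ρ) (y : ℝ) :
    ∑' n : ℕ, (if ρ ^ (n + 1) < y then ENNReal.ofReal y else 0)
      ≤ ENNReal.ofReal (1 / log ρ) * ENNReal.ofReal (y * logA 1 y) := by
  rcases le_or_gt y 0 with hy | hy
  · simp [ENNReal.ofReal_of_nonpos hy]
  have hlogρ : 0 ≤ 1 / log ρ := one_div_nonneg.2 (log_pos hρ).le
  calc ∑' n : ℕ, (if ρ ^ (n + 1) < y then ENNReal.ofReal y else 0)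
      ≤ ENNReal.ofReal (log y / log ρ) * ENNReal.ofReal y := tsum_ite_pow_succ_lt_le hρ y _
    _ = ENNReal.ofReal (1 / log ρ * (y * log y)) := by
        rw [← ENNReal.ofReal_mul' hy.le]
        congr 1
        ring
    _ ≤ ENNReal.ofReal (1 / log ρ) * ENNReal.ofReal (y * logA 1 y) := by
        rw [← ENNReal.ofReal_mul hlogρ]
        gcongr
        exact log_le_logA_one hy

theorem tail_series_le_LlogL_general
    {Ω : Type*} {mΩ : MeasurableSpace Ω} (μ : Measure Ω)
    (ρ : ℝ) (hρ : 1 < ρ) (Y : Ω → ℝ) (hYmeas : Measurable Y) :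
    ∑' n : ℕ, ∫⁻ ω in {ω | ρ ^ (n + 1) < Y ω}, ENNReal.ofReal (Y ω) ∂μ
      ≤ ENNReal.ofReal (1 / Real.log ρ)
        * ∫⁻ ω, ENNReal.ofReal (Y ω * logA 1 (Y ω)) ∂μ := by
  have hmeas (n : ℕ) : MeasurableSet {ω | ρ ^ (n + 1) < Y ω} :=
    measurableSet_lt measurable_const hYmeas
  calc ∑' n : ℕ, ∫⁻ ω in {ω | ρ ^ (n + 1) < Y ω}, ENNReal.ofReal (Y ω) ∂μ
      = ∫⁻ ω, ∑' n : ℕ, {ω | ρ ^ (n + 1) < Y ω}.indicator (fun ω ↦ ENNReal.ofReal (Y ω)) ω ∂μ := by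
        rw [lintegral_tsum fun n ↦ (hYmeas.ennreal_ofReal.indicator (hmeas n)).aemeasurable]
        simp_rw [lintegral_indicator (hmeas _)]
    _ ≤ ∫⁻ ω, ENNReal.ofReal (1 / log ρ) * ENNReal.ofReal (Y ω * logA 1 (Y ω)) ∂μ :=
        lintegral_mono fun ω ↦ by
          simpa only [Set.indicator_apply, Set.mem_ofPred_eq]
            using tsum_ite_pow_succ_lt_le_logA hρ (Y ω)
    _ = ENNReal.ofReal (1 / log ρ) * ∫⁻ ω, ENNReal.ofReal (Y ω * logA 1 (Y ω)) ∂μ :=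
        lintegral_const_mul' _ _ ENNReal.ofReal_ne_top

/-- for `ρ > 1` and a nonnegative random variable `Y`,
`∑_{n≥1} E[Y · 1_{Y > ρ^n}] ≤ (1/log ρ) · E[Y · log^{(1)}(Y)]`, in `[0,∞]`. -/
theorem tail_series_le_LlogL
    {Ω : Type*} {mΩ : MeasurableSpace Ω} (μ : Measure Ω) [IsProbabilityMeasure μ]
    (ρ : ℝ) (hρ : 1 < ρ) (Y : Ω → ℝ) (hYmeas : Measurable Y) (hYnonneg : ∀ ω, 0 ≤ Y ω) :
    ∑' n : ℕ, ∫⁻ ω in {ω | ρ ^ (n + 1) < Y ω}, ENNReal.ofReal (Y ω) ∂μ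
      ≤ ENNReal.ofReal (1 / Real.log ρ)
        * ∫⁻ ω, ENNReal.ofReal (Y ω * logA 1 (Y ω)) ∂μ :=
  tail_series_le_LlogL_general (mΩ := mΩ) μ ρ hρ Y hYmeas
end

section
/- Let ρ > 1, α ≥ 1, and let (γ_n)_{n≥1} be nonnegative reals with Σ_{n≥1} γ_n/n^α < ∞. Then there exists a constant C ≥ 0, depending only on ρ, α and (γ_n), such that for every nonnegative random variable Y: Σ_{n≥1} γ_n · E[Y · 1_{Y > ρ^n}] ≤ C · E[Y · log^{(α)}(Y)], where both sides take values in [0,∞]. -/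
open MeasureTheory

section LogA

variable {a : ℝ}

lemma div_exp_one_rpow (ha : 0 ≤ a) : (a / Real.exp 1) ^ a = a ^ a / Real.exp a := by
  rw [Real.div_rpow ha (Real.exp_pos 1).le, Real.exp_one_rpow]

lemma monotone_logA (ha : 0 ≤ a) : Monotone (logA a) := by
  intro x y hxy
  unfold logA
  split_ifs with hx hy hy
  · exact mul_le_mul_of_nonneg_left hxy (by positivity)
  · have hy_pos : 0 < y := (Real.exp_pos a).trans_le (not_lt.1 hy)
    have ha_log : a ≤ Real.log y := (Real.le_log_iff_exp_le hy_pos).2 (not_lt.1 hy)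
    calc (a / Real.exp 1) ^ a * x ≤ (a / Real.exp 1) ^ a * Real.exp a := by gcongr
      _ = a ^ a := by rw [div_exp_one_rpow ha, div_mul_cancel₀ _ (Real.exp_pos a).ne']
      _ ≤ Real.log y ^ a := by gcongr
  · exact absurd (hy.trans_le (not_lt.1 hx)) (not_lt.2 hxy)
  · have hx_pos : 0 < x := (Real.exp_pos a).trans_le (not_lt.1 hx)
    have ha_log : a ≤ Real.log x := (Real.le_log_iff_exp_le hx_pos).2 (not_lt.1 hx)
    exact Real.rpow_le_rpow (ha.trans ha_log) (Real.log_le_log hx_pos hxy) ha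

lemma min_one_div_exp_mul_log_rpow_le_logA (ha : 0 ≤ a) {ρ x : ℝ} (hρ : 1 ≤ ρ) (hρx : ρ ≤ x) :
    min 1 (ρ / Real.exp a) * Real.log x ^ a ≤ logA a x := by
  have hlog : 0 ≤ Real.log x := Real.log_nonneg (hρ.trans hρx)
  unfold logA
  split_ifs with hx
  · have hlog_lt : Real.log x < a := (Real.log_lt_iff_lt_exp (by linarith)).2 hx
    calc min 1 (ρ / Real.exp a) * Real.log x ^ a ≤ ρ / Real.exp a * a ^ a := by
          gcongr
          exact min_le_right _ _
      _ = a ^ a / Real.exp a * ρ := by ring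
      _ ≤ (a / Real.exp 1) ^ a * x := by rw [div_exp_one_rpow ha]; gcongr
  · exact mul_le_of_le_one_left (by positivity) (min_le_left _ _)

lemma le_logA_pow_succ (ha : 0 ≤ a) {ρ : ℝ} (hρ : 1 ≤ ρ) (n : ℕ) :
    min 1 (ρ / Real.exp a) * Real.log ρ ^ a * ((n : ℝ) + 1) ^ a ≤ logA a (ρ ^ (n + 1)) := by
  have h := min_one_div_exp_mul_log_rpow_le_logA ha hρ (le_self_pow₀ hρ n.add_one_ne_zero)
  rwa [Real.log_pow, Nat.cast_add_one, Real.mul_rpow (by positivity) (Real.log_nonneg hρ),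
    mul_comm (_ ^ a), ← mul_assoc] at h

lemma logA_pow_succ_pos (ha : 0 ≤ a) {ρ : ℝ} (hρ : 1 < ρ) (n : ℕ) : 0 < logA a (ρ ^ (n + 1)) := by
  have hlogρ := Real.log_pos hρ
  exact lt_of_lt_of_le (by positivity) (le_logA_pow_succ ha hρ.le n)

lemma summable_div_logA_pow_succ (ha : 0 ≤ a) {ρ : ℝ} (hρ : 1 < ρ) {g : ℕ → ℝ}
    (hg : ∀ n, 0 ≤ g n)
    (hsum : Summable fun n : ℕ => g n / ((n : ℝ) + 1) ^ a) :
    Summable fun n : ℕ => g n / logA a (ρ ^ (n + 1)) := by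
  set m := min 1 (ρ / Real.exp a) * Real.log ρ ^ a
  have hlogρ := Real.log_pos hρ
  refine (hsum.mul_left m⁻¹).of_nonneg_of_le
    (fun n => div_nonneg (hg n) (logA_pow_succ_pos ha hρ n).le) fun n => ?_
  calc g n / logA a (ρ ^ (n + 1)) ≤ g n / (m * ((n : ℝ) + 1) ^ a) :=
        div_le_div_of_nonneg_left (hg n) (by positivity) (le_logA_pow_succ ha hρ.le n)
    _ = m⁻¹ * (g n / ((n : ℝ) + 1) ^ a) := by ring

end LogA

section Markov

variable {Ω : Type*} [MeasurableSpace Ω] (μ : Measure Ω) {φ : ℝ → ℝ} {Y : Ω → ℝ}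

lemma ofReal_mul_setLIntegral_lt_le (hφ : Monotone φ) (hY : Measurable Y) (hY0 : ∀ ω, 0 ≤ Y ω)
    {t : ℝ} (ht : 0 ≤ φ t) :
    ENNReal.ofReal (φ t) * ∫⁻ ω in {ω | t < Y ω}, ENNReal.ofReal (Y ω) ∂μ
      ≤ ∫⁻ ω, ENNReal.ofReal (Y ω * φ (Y ω)) ∂μ := by
  rw [← lintegral_const_mul' _ _ ENNReal.ofReal_ne_top]
  refine (setLIntegral_mono' (measurableSet_lt measurable_const hY) fun ω hω => ?_).trans
    (setLIntegral_le_lintegral _ _)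
  rw [← ENNReal.ofReal_mul ht, mul_comm]
  exact ENNReal.ofReal_le_ofReal (mul_le_mul_of_nonneg_left (hφ (le_of_lt hω)) (hY0 ω))

lemma ofReal_mul_setLIntegral_lt_le_div (hφ : Monotone φ) (hY : Measurable Y)
    (hY0 : ∀ ω, 0 ≤ Y ω) {t c : ℝ} (ht : 0 < φ t) (hc : 0 ≤ c) :
    ENNReal.ofReal c * ∫⁻ ω in {ω | t < Y ω}, ENNReal.ofReal (Y ω) ∂μ
      ≤ ENNReal.ofReal (c / φ t) * ∫⁻ ω, ENNReal.ofReal (Y ω * φ (Y ω)) ∂μ := by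
  calc ENNReal.ofReal c * ∫⁻ ω in {ω | t < Y ω}, ENNReal.ofReal (Y ω) ∂μ
      = ENNReal.ofReal (c / φ t)
          * (ENNReal.ofReal (φ t) * ∫⁻ ω in {ω | t < Y ω}, ENNReal.ofReal (Y ω) ∂μ) := by
        rw [← mul_assoc, ← ENNReal.ofReal_mul (by positivity), div_mul_cancel₀ _ ht.ne']
    _ ≤ _ := by gcongr; exact ofReal_mul_setLIntegral_lt_le μ hφ hY hY0 ht.le

end Markov

/-- for `ρ > 1`, `α ≥ 1` and nonnegative weights `(γ_n)_{n≥1}` with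
`∑_{n≥1} γ_n / n^α < ∞`, there is a constant `C ≥ 0` (depending only on `ρ`, `α`, `γ`)
such that for every nonnegative random variable `Y`,
`∑_{n≥1} γ_n E[Y · 1_{Y > ρ^n}] ≤ C · E[Y · log^{(α)}(Y)]`, in `[0,∞]`. -/
theorem weighted_tail_series_le_LlogL
    (ρ : ℝ) (hρ : 1 < ρ) (α : ℝ) (hα : 1 ≤ α)
    (γ : ℕ → ℝ) (hγnonneg : ∀ n, 0 ≤ γ n)
    (hγsum : Summable fun n : ℕ => γ (n + 1) / ((n : ℝ) + 1) ^ α) :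
    ∃ C : ℝ, 0 ≤ C ∧
      ∀ (Ω : Type) (mΩ : MeasurableSpace Ω) (μ : Measure Ω), IsProbabilityMeasure μ →
        ∀ Y : Ω → ℝ, Measurable Y → (∀ ω, 0 ≤ Y ω) →
          ∑' n : ℕ, ENNReal.ofReal (γ (n + 1))
              * ∫⁻ ω in {ω | ρ ^ (n + 1) < Y ω}, ENNReal.ofReal (Y ω) ∂μ
            ≤ ENNReal.ofReal C * ∫⁻ ω, ENNReal.ofReal (Y ω * logA α (Y ω)) ∂μ := by
  have hα0 : 0 ≤ α := zero_le_one.trans hα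
  set f : ℕ → ℝ := fun n => γ (n + 1) / logA α (ρ ^ (n + 1))
  have hf0 : ∀ n, 0 ≤ f n := fun n => div_nonneg (hγnonneg _) (logA_pow_succ_pos hα0 hρ n).le
  have hf : Summable f := summable_div_logA_pow_succ hα0 hρ (fun n => hγnonneg _) hγsum
  refine ⟨∑' n, f n, tsum_nonneg hf0, fun Ω _ μ _ Y hY hY0 => ?_⟩
  calc _ ≤ ∑' n, ENNReal.ofReal (f n) * ∫⁻ ω, ENNReal.ofReal (Y ω * logA α (Y ω)) ∂μ :=
        ENNReal.tsum_le_tsum fun n => ofReal_mul_setLIntegral_lt_le_div μ (monotone_logA hα0) hY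
          hY0 (logA_pow_succ_pos hα0 hρ n) (hγnonneg _)
    _ = _ := by rw [ENNReal.tsum_mul_right, ENNReal.ofReal_tsum_of_nonneg hf0 hf]
end

section
/- Let p > 1, r ∈ (0,1), and set ρ := (1/r)^{1/(p−1)}. Then there exists a constant C ≥ 0, depending only on p and r, such that for every nonnegative random variable Y: Σ_{n≥1} r^n · E[Y^p · 1_{Y ≤ ρ^n}] ≤ C · E[Y], where both sides take values in [0,∞]. -/
/-!
Since `ρ ^ (p - 1) = 1 / r`, the truncation `y ≤ ρ ^ n` is equivalent to `x_n ≤ 1` for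
`x_n := r ^ n * y ^ (p - 1)`, and the `n`-th term of the series at a point where `Y = y` is
`y * x_n * 1{x_n ≤ 1}`. The `x_n` decrease geometrically with ratio `r`, so those that are at
most `1` sum to at most `1 / (1 - r)`. Integrating this pointwise bound gives `C = 1 / (1 - r)`.
-/

open MeasureTheory

theorem tsum_truncated_geometric_le {r t : ℝ} (hr0 : 0 ≤ r) (hr1 : r < 1) :
    ∑' n : ℕ, (if r ^ n * t ≤ 1 then ENNReal.ofReal (r ^ n * t) else 0)
      ≤ ENNReal.ofReal (1 - r)⁻¹ := by
  have hex : ∃ N, r ^ N * t ≤ 1 := by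
    have := (tendsto_pow_atTop_nhds_zero_of_lt_one hr0 hr1).mul_const t
    rw [zero_mul] at this
    exact (this.eventually (ge_mem_nhds zero_lt_one)).exists
  obtain ⟨N, hN, h_head⟩ : ∃ N, r ^ N * t ≤ 1 ∧ ∀ n < N, ¬ r ^ n * t ≤ 1 :=
    ⟨Nat.find hex, Nat.find_spec hex, fun _ => Nat.find_min hex⟩
  rw [← ENNReal.summable.sum_add_tsum_nat_add' (k := N),
    Finset.sum_eq_zero fun n hn => if_neg (h_head n (Finset.mem_range.mp hn)), zero_add]
  calc ∑' k, (if r ^ (k + N) * t ≤ 1 then ENNReal.ofReal (r ^ (k + N) * t) else 0)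
      ≤ ∑' k : ℕ, ENNReal.ofReal r ^ k := by
        refine ENNReal.tsum_le_tsum fun k => ?_
        rw [← ENNReal.ofReal_pow hr0]
        split_ifs
        · apply ENNReal.ofReal_le_ofReal
          rw [pow_add, mul_assoc]
          exact mul_le_of_le_one_right (pow_nonneg hr0 k) hN
        · exact zero_le
    _ = ENNReal.ofReal (1 - r)⁻¹ := by
        rw [ENNReal.tsum_geometric, ENNReal.ofReal_inv_of_pos (sub_pos.mpr hr1),
          ENNReal.ofReal_sub _ hr0, ENNReal.ofReal_one]

theorem le_pow_iff_pow_mul_rpow_le_one {q r y : ℝ} (hq : 0 < q) (hr : 0 < r) (hy : 0 ≤ y)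
    (m : ℕ) : y ≤ ((1 / r) ^ (1 / q)) ^ m ↔ r ^ m * y ^ q ≤ 1 := by
  rw [← Real.rpow_natCast, ← Real.rpow_mul (by positivity), mul_comm,
    Real.rpow_mul (by positivity), Real.rpow_natCast, one_div q,
    Real.le_rpow_inv_iff_of_pos hy (by positivity) hq, one_div_pow, le_div_iff₀ (by positivity),
    mul_comm]

theorem tsum_truncated_moment_le {p r y : ℝ} (hp : 1 < p) (hr0 : 0 < r) (hr1 : r < 1)
    (hy : 0 ≤ y) :
    ∑' n : ℕ, ENNReal.ofReal (r ^ (n + 1)) *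
        (if y ≤ ((1 / r) ^ (1 / (p - 1))) ^ (n + 1) then ENNReal.ofReal (y ^ p) else 0)
      ≤ ENNReal.ofReal (1 - r)⁻¹ * ENNReal.ofReal y := by
  have hy_rpow : y ^ p = y * y ^ (p - 1) := by
    simpa using Real.rpow_add' hy (show 1 + (p - 1) ≠ 0 by linarith)
  calc _ = ∑' n : ℕ, ENNReal.ofReal y * (if r ^ n * (r * y ^ (p - 1)) ≤ 1
          then ENNReal.ofReal (r ^ n * (r * y ^ (p - 1))) else 0) := by
        congr 1 with n
        simp only [le_pow_iff_pow_mul_rpow_le_one (sub_pos.mpr hp) hr0 hy]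
        rw [pow_succ, mul_assoc]
        split_ifs
        · rw [← ENNReal.ofReal_mul hy, ← ENNReal.ofReal_mul (by positivity), hy_rpow]
          ring_nf
        · simp
    _ = ENNReal.ofReal y * ∑' n : ℕ, (if r ^ n * (r * y ^ (p - 1)) ≤ 1
          then ENNReal.ofReal (r ^ n * (r * y ^ (p - 1))) else 0) := ENNReal.tsum_mul_left
    _ ≤ ENNReal.ofReal y * ENNReal.ofReal (1 - r)⁻¹ := by
        gcongr
        exact tsum_truncated_geometric_le hr0.le hr1
    _ = _ := mul_comm _ _

theorem tsum_mul_setLIntegral_eq_lintegral_tsum {Ω ι : Type*} [MeasurableSpace Ω] [Countable ι]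
    (μ : Measure Ω) {f : Ω → ENNReal} (hf : Measurable f) {s : ι → Set Ω}
    (hs : ∀ i, MeasurableSet (s i)) (c : ι → ENNReal) :
    ∑' i, c i * ∫⁻ ω in s i, f ω ∂μ = ∫⁻ ω, ∑' i, c i * (s i).indicator f ω ∂μ := by
  rw [lintegral_tsum fun i => ((hf.indicator (hs i)).const_mul (c i)).aemeasurable]
  congr 1 with i
  rw [lintegral_const_mul _ (hf.indicator (hs i)), lintegral_indicator (hs i)]

/-- for `p > 1`, `r ∈ (0,1)` and `ρ = (1/r)^{1/(p−1)}`, there is a constant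
`C ≥ 0` (depending only on `p` and `r`) such that for every nonnegative random variable `Y`,
`∑_{n≥1} r^n E[Y^p · 1_{Y ≤ ρ^n}] ≤ C · E[Y]`, in `[0,∞]`. -/
theorem truncated_moment_series_le
    (p : ℝ) (hp : 1 < p) (r : ℝ) (hr0 : 0 < r) (hr1 : r < 1) :
    ∃ C : ℝ, 0 ≤ C ∧
      ∀ (Ω : Type) (mΩ : MeasurableSpace Ω) (μ : Measure Ω), IsProbabilityMeasure μ →
        ∀ Y : Ω → ℝ, Measurable Y → (∀ ω, 0 ≤ Y ω) →
          ∑' n : ℕ, ENNReal.ofReal (r ^ (n + 1))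
              * ∫⁻ ω in {ω | Y ω ≤ ((1 / r) ^ (1 / (p - 1))) ^ (n + 1)},
                  ENNReal.ofReal (Y ω ^ p) ∂μ
            ≤ ENNReal.ofReal C * ∫⁻ ω, ENNReal.ofReal (Y ω) ∂μ := by
  refine ⟨(1 - r)⁻¹, inv_nonneg.mpr (sub_nonneg.mpr hr1.le), ?_⟩
  intro Ω _ μ _ Y hY hY0
  rw [tsum_mul_setLIntegral_eq_lintegral_tsum μ (by fun_prop)
      (fun n => measurableSet_le hY measurable_const),
    ← lintegral_const_mul _ hY.ennreal_ofReal]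
  refine lintegral_mono fun ω => ?_
  simpa only [Set.indicator_apply, Set.mem_ofPred_eq] using
    tsum_truncated_moment_le hp hr0 hr1 (hY0 ω)
end
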